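/- arXiv:2106.01409 — 8 statements merged into one kernel-verified Lean document; each statement's English description precedes it below -/
import Mathlib

section
/- Let A ⊆ ℕ have positive lower density d, let r > 1 be a real number, and let N ≥ 1 be an integer. Then there exists a subset A' ⊆ A of positive lower density such that for all n, m ∈ A' with n ≠ m, one has |n - r·m| ≥ N. -/
/-!
Fix `1 < ρ < r`. Any two elements `n, m` of a block `(a, ρ a]` satisfy `r m - n > (r - ρ) a`,
so a block is `N`-separated once `a` is large. Positive lower density of `A`
means that for each scale `t` the interval `(t, ρ ^ L t]` contains at least `3t - 2t = t`
elements of `A` when `δ ρ ^ L ≥ 3`, so one of its `L` sub-blocks `(ρ ^ j t, ρ ^ (j + 1) t]`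
contains at least `t / L` of them. Taking one such block at each of the scales `t₀ Q ^ k` with
`Q = 2 r ρ ^ L` keeps distinct blocks `N`-separated from each other, and the union of these
blocks, intersected with `A`, still has lower density at least `1 / (L ρ ^ L Q)`.
-/

open scoped Classical

noncomputable def lowerDensity (A : Set ℕ) : ℝ :=
  Filter.liminf
    (fun N : ℕ => (((Finset.range (N + 1)).filter (· ∈ A)).card : ℝ) / (N : ℝ))
    Filter.atTop

open Filter Finset

noncomputable def counting (A : Set ℕ) (M : ℕ) : ℕ := #{n ∈ range (M + 1) | n ∈ A}

theorem lowerDensity_eq_liminf_counting (A : Set ℕ) :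
    lowerDensity A = liminf (fun M : ℕ => (counting A M : ℝ) / M) atTop := rfl

theorem counting_mono (A : Set ℕ) : Monotone (counting A) := fun _ _ hab =>
  card_le_card (filter_subset_filter _ (range_subset_range.2 (Nat.succ_le_succ hab)))

theorem counting_le (A : Set ℕ) (M : ℕ) : counting A M ≤ M + 1 :=
  (card_filter_le _ _).trans (card_range _).le

theorem counting_le_add_card_Ioc (A : Set ℕ) (a b : ℕ) :
    counting A b ≤ counting A a + #{n ∈ Ioc a b | n ∈ A} := by
  have hsub : {n ∈ range (b + 1) | n ∈ A} ⊆
      {n ∈ range (a + 1) | n ∈ A} ∪ {n ∈ Ioc a b | n ∈ A} := by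
    intro n hn
    simp only [mem_union, mem_filter, mem_range, mem_Ioc] at hn ⊢
    rcases le_or_gt n a with h | h
    exacts [.inl ⟨by omega, hn.2⟩, .inr ⟨⟨h, by omega⟩, hn.2⟩]
  exact (card_le_card hsub).trans (card_union_le _ _)

theorem card_filter_Ioc_le_sum (A : Set ℕ) (a : ℕ → ℕ) (L : ℕ) :
    #{n ∈ Ioc (a 0) (a L) | n ∈ A} ≤ ∑ j ∈ range L, #{n ∈ Ioc (a j) (a (j + 1)) | n ∈ A} := by
  induction L with
  | zero => simp
  | succ L ih =>
    have hsub : {n ∈ Ioc (a 0) (a (L + 1)) | n ∈ A} ⊆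
        {n ∈ Ioc (a 0) (a L) | n ∈ A} ∪ {n ∈ Ioc (a L) (a (L + 1)) | n ∈ A} := by
      intro n hn
      simp only [mem_union, mem_filter, mem_Ioc] at hn ⊢
      rcases le_or_gt n (a L) with h | h
      exacts [.inl ⟨⟨hn.1.1, h⟩, hn.2⟩, .inr ⟨⟨h, hn.1.2⟩, hn.2⟩]
    rw [sum_range_succ]
    exact (card_le_card hsub).trans ((card_union_le _ _).trans (by omega))

theorem card_filter_Ioc_floor_le_counting {A B : Set ℕ} {a b : ℝ} {M : ℕ} (ha : 0 ≤ a)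
    (hbM : ⌊b⌋₊ ≤ M) (hAB : ∀ n ∈ A, a < n → (n : ℝ) ≤ b → n ∈ B) :
    #{n ∈ Ioc ⌊a⌋₊ ⌊b⌋₊ | n ∈ A} ≤ counting B M := by
  refine card_le_card fun n hn => ?_
  simp only [mem_filter, mem_Ioc, mem_range] at hn ⊢
  obtain ⟨⟨han, hnb⟩, hnA⟩ := hn
  have hb : 0 ≤ b := zero_le_one.trans (Nat.floor_pos.1 (by omega))
  exact ⟨by omega, hAB n hnA ((Nat.floor_lt ha).1 han) ((Nat.le_floor_iff hb).1 hnb)⟩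

theorem exists_pos_forall_ge_mul_le_counting {A : Set ℕ} (hA : 0 < lowerDensity A) :
    ∃ δ > 0, ∃ X₀ : ℝ, ∀ X ≥ X₀, δ * X ≤ counting A ⌊X⌋₊ := by
  have hbdd : IsBoundedUnder (· ≥ ·) atTop (fun M : ℕ => (counting A M : ℝ) / M) :=
    isBoundedUnder_of ⟨0, fun M => by positivity⟩
  obtain ⟨M₀, hM₀⟩ : ∃ M₀, ∀ M ≥ M₀, lowerDensity A / 2 < (counting A M : ℝ) / M :=
    eventually_atTop.1 (eventually_lt_of_lt_liminf (half_lt_self hA) hbdd)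
  refine ⟨lowerDensity A / 4, by positivity, max M₀ 2, fun X hX => ?_⟩
  have hX2 : 2 ≤ X := le_of_max_le_right hX
  have hM : M₀ ≤ ⌊X⌋₊ := Nat.le_floor (le_of_max_le_left hX)
  have hXM : X ≤ 2 * ⌊X⌋₊ := by linarith [Nat.lt_floor_add_one X]
  have hMpos : (0 : ℝ) < ⌊X⌋₊ := by linarith
  have hcount := (lt_div_iff₀ hMpos).1 (hM₀ _ hM)
  nlinarith

theorem le_lowerDensity_of_forall_ge {A : Set ℕ} {ε X₀ : ℝ}
    (h : ∀ X ≥ X₀, ε * X ≤ counting A ⌊X⌋₊) : ε ≤ lowerDensity A := by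
  rw [lowerDensity_eq_liminf_counting]
  have hcobdd : IsCoboundedUnder (· ≥ ·) atTop (fun M : ℕ => (counting A M : ℝ) / M) := by
    refine IsBoundedUnder.isCoboundedUnder_ge (isBoundedUnder_of ⟨2, fun M => ?_⟩)
    rcases Nat.eq_zero_or_pos M with rfl | hM
    · simp
    have hM' : (1 : ℝ) ≤ M := by exact_mod_cast hM
    have hcount : (counting A M : ℝ) ≤ M + 1 := by exact_mod_cast counting_le A M
    rw [div_le_iff₀ (by positivity)]
    linarith
  refine le_liminf_of_le hcobdd (eventually_atTop.2 ⟨max ⌈X₀⌉₊ 1, fun M hM => ?_⟩)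
  have hMpos : (0 : ℝ) < M := by exact_mod_cast (le_of_max_le_right hM)
  rw [le_div_iff₀ hMpos]
  simpa using h M (Nat.ceil_le.1 (le_of_max_le_left hM))

theorem le_lowerDensity_of_geometric {A : Set ℕ} {c t Q : ℝ} (hc : 0 ≤ c) (ht : 0 < t)
    (hQ : 1 < Q) (h : ∀ k : ℕ, c * (t * Q ^ k) ≤ counting A ⌊t * Q ^ k⌋₊) :
    c / Q ≤ lowerDensity A := by
  refine le_lowerDensity_of_forall_ge (X₀ := t) fun X hX => ?_
  obtain ⟨k, hkX, hXk⟩ := exists_nat_pow_near ((one_le_div ht).2 hX) hQ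
  rw [le_div_iff₀ ht, mul_comm] at hkX
  rw [div_lt_iff₀ ht, pow_succ, mul_comm, ← mul_assoc] at hXk
  calc c / Q * X ≤ c * (t * Q ^ k) := by
        rw [div_mul_eq_mul_div, div_le_iff₀ (by linarith), mul_assoc]
        exact mul_le_mul_of_nonneg_left (by linarith) hc
    _ ≤ counting A ⌊t * Q ^ k⌋₊ := h k
    _ ≤ counting A ⌊X⌋₊ := by exact_mod_cast counting_mono A (Nat.floor_le_floor hkX)

theorem exists_dense_block {A : Set ℕ} {δ X₀ ρ t : ℝ} {L : ℕ}
    (hdens : ∀ X ≥ X₀, δ * X ≤ counting A ⌊X⌋₊) (hρ : 1 ≤ ρ) (hL : 3 ≤ δ * ρ ^ L)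
    (ht : 1 ≤ t) (htX : X₀ ≤ t) :
    ∃ j < L, t ≤ L * #{n ∈ Ioc ⌊ρ ^ j * t⌋₊ ⌊ρ * (ρ ^ j * t)⌋₊ | n ∈ A} := by
  set block := fun j : ℕ => #{n ∈ Ioc ⌊ρ ^ j * t⌋₊ ⌊ρ * (ρ ^ j * t)⌋₊ | n ∈ A}
  have htop : 3 * t ≤ counting A ⌊ρ ^ L * t⌋₊ := by
    have hρL : 1 ≤ ρ ^ L := one_le_pow₀ hρ
    have hcount := hdens (ρ ^ L * t) (by nlinarith)
    nlinarith
  have hbot : (counting A ⌊t⌋₊ : ℝ) ≤ 2 * t := by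
    have hfloor := Nat.floor_le (zero_le_one.trans ht)
    have hcount : (counting A ⌊t⌋₊ : ℝ) ≤ ⌊t⌋₊ + 1 := by exact_mod_cast counting_le A _
    linarith
  have hsplit : #{n ∈ Ioc ⌊t⌋₊ ⌊ρ ^ L * t⌋₊ | n ∈ A} ≤ ∑ j ∈ range L, block j := by
    simpa only [pow_zero, one_mul, pow_succ', mul_assoc] using
      card_filter_Ioc_le_sum A (fun j => ⌊ρ ^ j * t⌋₊) L
  have htotal : t ≤ ∑ j ∈ range L, (block j : ℝ) := by
    have hcount : (counting A ⌊ρ ^ L * t⌋₊ : ℝ) ≤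
        counting A ⌊t⌋₊ + ∑ j ∈ range L, (block j : ℝ) := by
      exact_mod_cast (counting_le_add_card_Ioc A _ _).trans (Nat.add_le_add_left hsplit _)
    linarith
  have hL0 : (range L).Nonempty := by
    rw [nonempty_range_iff]
    rintro rfl
    simp only [range_zero, sum_empty] at htotal
    linarith
  obtain ⟨j, hj, hjt⟩ := exists_le_of_sum_le (f := fun _ => t) (g := fun j => L * (block j : ℝ))
    hL0 (by simpa [← mul_sum] using mul_le_mul_of_nonneg_left htotal (Nat.cast_nonneg L))
  exact ⟨j, mem_range.1 hj, hjt⟩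

theorem abs_sub_mul_ge_of_mem_blocks {r ρ N : ℝ} {a : ℕ → ℝ} (hr : 1 ≤ r)
    (hnear : ∀ k, N ≤ (r - ρ) * a k) (hfar : ∀ k l, k < l → r * (ρ * a k) + N ≤ a l)
    {n m k l : ℕ} (hn : a k < n ∧ n ≤ ρ * a k) (hm : a l < m ∧ m ≤ ρ * a l) :
    N ≤ |n - r * m| := by
  have hn0 : (0 : ℝ) ≤ n := n.cast_nonneg
  have hm0 : (0 : ℝ) ≤ m := m.cast_nonneg
  rcases lt_trichotomy k l with hkl | rfl | hlk
  · have := hfar k l hkl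
    rw [abs_sub_comm, le_abs]
    left
    nlinarith
  · have := hnear k
    rw [abs_sub_comm, le_abs]
    left
    nlinarith
  · have := hfar l k hlk
    rw [le_abs]
    left
    nlinarith

theorem lowerDensity_pos_of_blocks {A : Set ℕ} {a b : ℕ → ℝ} {c t Q : ℝ} (hc : 0 < c)
    (ht : 0 < t) (hQ : 1 < Q) (ha : ∀ k, 0 ≤ a k) (hb : ∀ k, b k ≤ t * Q ^ k)
    (hcard : ∀ k, c * (t * Q ^ k) ≤ #{n ∈ Ioc ⌊a k⌋₊ ⌊b k⌋₊ | n ∈ A}) :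
    0 < lowerDensity {n | n ∈ A ∧ ∃ k, a k < n ∧ n ≤ b k} := by
  refine lt_of_lt_of_le (by positivity)
    (le_lowerDensity_of_geometric hc.le ht hQ fun k => (hcard k).trans ?_)
  exact mod_cast card_filter_Ioc_floor_le_counting (ha k) (Nat.floor_le_floor (hb k))
    fun n hnA han hnb => ⟨hnA, k, han, hnb⟩

theorem geometric_block_gap {r ρ N t₀ : ℝ} {L i i' k l : ℕ} (hr : 1 ≤ r) (hρ : 1 ≤ ρ)
    (ht₀ : 0 ≤ t₀) (hN : N ≤ r * t₀) (hi : i < L) (hkl : k < l) :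
    r * (ρ * (ρ ^ i * (t₀ * (2 * r * ρ ^ L) ^ k))) + N ≤
      ρ ^ i' * (t₀ * (2 * r * ρ ^ L) ^ l) := by
  set Q := 2 * r * ρ ^ L
  set T := t₀ * Q ^ k
  have hρL : 1 ≤ ρ ^ L := one_le_pow₀ hρ
  have hQ : 1 ≤ Q := by nlinarith
  have hT : t₀ ≤ T := le_mul_of_one_le_right ht₀ (one_le_pow₀ hQ)
  have hρi : ρ * ρ ^ i ≤ ρ ^ L := by rw [← pow_succ']; exact pow_le_pow_right₀ hρ hi
  have hT0 : 0 ≤ T := ht₀.trans hT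
  have hblock : r * (ρ * (ρ ^ i * T)) ≤ r * (ρ ^ L * T) := by
    rw [← mul_assoc ρ]
    gcongr
  have hNT : N ≤ r * (ρ ^ L * T) :=
    hN.trans (by gcongr; exact hT.trans (le_mul_of_one_le_left hT0 hρL))
  calc r * (ρ * (ρ ^ i * T)) + N ≤ r * (ρ ^ L * T) + r * (ρ ^ L * T) := by linarith
    _ = t₀ * Q ^ (k + 1) := by ring
    _ ≤ t₀ * Q ^ l := mul_le_mul_of_nonneg_left (pow_le_pow_right₀ hQ hkl) ht₀
    _ ≤ ρ ^ i' * (t₀ * Q ^ l) := le_mul_of_one_le_left (by positivity) (one_le_pow₀ hρ)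

theorem stmt_0_general (A : Set ℕ) (hA : 0 < lowerDensity A) (r : ℝ) (hr : 1 < r)
    (N : ℕ) :
    ∃ A' : Set ℕ, A' ⊆ A ∧ 0 < lowerDensity A' ∧
      ∀ n ∈ A', ∀ m ∈ A', n ≠ m → (N : ℝ) ≤ |(n : ℝ) - r * (m : ℝ)| := by
  obtain ⟨δ, hδ, X₀, hdens⟩ := exists_pos_forall_ge_mul_le_counting hA
  obtain ⟨ρ, hρ, hρr⟩ := exists_between hr
  obtain ⟨L, hL⟩ := pow_unbounded_of_one_lt (3 / δ) hρ
  rw [div_lt_iff₀' hδ] at hL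
  set Q := 2 * r * ρ ^ L
  have hQ : 1 < Q := by nlinarith [one_le_pow₀ (n := L) hρ.le]
  set t₀ := max (max X₀ 1) (N / (r - ρ))
  have hNt₀ : N ≤ (r - ρ) * t₀ := (div_le_iff₀' (by linarith)).1 (le_max_right _ _)
  have ht₀ : max X₀ 1 ≤ t₀ := le_max_left _ _
  have ht : ∀ k, t₀ ≤ t₀ * Q ^ k := fun k =>
    le_mul_of_one_le_right (by positivity) (one_le_pow₀ hQ.le)
  choose j hjL hj using fun k => exists_dense_block hdens hρ.le hL.le
    ((le_of_max_le_right ht₀).trans (ht k)) ((le_of_max_le_left ht₀).trans (ht k))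
  set a := fun k => ρ ^ j k * (t₀ * Q ^ k)
  have ha : ∀ k, t₀ * Q ^ k ≤ a k := fun k =>
    le_mul_of_one_le_left (by positivity) (one_le_pow₀ hρ.le)
  have hL0 : (0 : ℝ) < L := mod_cast (hjL 0).pos
  refine ⟨{n | n ∈ A ∧ ∃ k, a k < n ∧ n ≤ ρ * a k}, fun n hn => hn.1, ?_, ?_⟩
  · refine lowerDensity_pos_of_blocks (c := 1 / (L * ρ ^ L)) (t := ρ ^ L * t₀) (by positivity)
      (by positivity) hQ (fun k => (by positivity : (0 : ℝ) ≤ a k)) (fun k => ?_) fun k => ?_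
    · rw [mul_assoc, ← mul_assoc ρ, ← pow_succ']
      exact mul_le_mul_of_nonneg_right (pow_le_pow_right₀ hρ.le (hjL k)) (by positivity)
    · calc 1 / (L * ρ ^ L) * (ρ ^ L * t₀ * Q ^ k) = t₀ * Q ^ k / L := by field_simp
        _ ≤ _ := by rw [div_le_iff₀' hL0]; exact hj k
  · rintro n ⟨-, k, hn⟩ m ⟨-, l, hm⟩ -
    have hNt₀' : (N : ℝ) ≤ r * t₀ := hNt₀.trans (by gcongr; linarith)
    exact abs_sub_mul_ge_of_mem_blocks hr.le
      (fun k => hNt₀.trans (by gcongr; exact (ht k).trans (ha k)))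
      (fun k l hkl => geometric_block_gap hr.le hρ.le (by positivity) hNt₀' (hjL k) hkl) hn hm

theorem stmt_0 (A : Set ℕ) (hA : 0 < lowerDensity A) (r : ℝ) (hr : 1 < r)
    (N : ℕ) (hN : 1 ≤ N) :
    ∃ A' : Set ℕ, A' ⊆ A ∧ 0 < lowerDensity A' ∧
      ∀ n ∈ A', ∀ m ∈ A', n ≠ m → (N : ℝ) ≤ |(n : ℝ) - r * (m : ℝ)| :=
  stmt_0_general A hA r hr N
end

section
/- Let A ⊆ ℕ have positive upper density, let r > 1 be a real number, and let N ≥ 1 be an integer. Then there exists a subset A' ⊆ A of positive upper density such that for all n, m ∈ A' with n ≠ m, one has |n - r·m| ≥ N. -/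
open scoped Classical

set_option maxHeartbeats 1000000


lemma key_lemma (A : Set ℕ) (r : ℝ) (hr : 1 < r) (N : ℕ) (c : ℝ) (hc : 0 < c)
    (hfreq : ∃ᶠ M : ℕ in Filter.atTop,
      c * M ≤ (((Finset.range (M+1)).filter (· ∈ A)).card : ℝ)) :
    ∃ c' : ℝ, 0 < c' ∧ ∀ P : ℕ, ∃ a b : ℕ, P ≤ a ∧ a < b ∧ ((b:ℝ) + N ≤ r * a) ∧
      c' * b ≤ ((((Finset.Ioc a b).filter (· ∈ A)).card : ℝ)) := by
  have hr0 : (0:ℝ) < r := lt_trans one_pos hr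
  set ρ : ℝ := (r+1)/(2*r) with hρ
  have hρ0 : 0 < ρ := by positivity
  have hρ1 : ρ < 1 := by rw [hρ, div_lt_one (by positivity)]; linarith
  obtain ⟨J0, hJ0⟩ := exists_pow_lt_of_lt_one (show (0:ℝ) < c/4 by positivity) hρ1
  set J := max J0 1 with hJdef
  have hJ1 : 1 ≤ J := le_max_right _ _
  have hJR : (0:ℝ) < J := by exact_mod_cast hJ1
  have hJpow : ρ ^ J ≤ c/4 :=
    le_of_lt (lt_of_le_of_lt (pow_le_pow_of_le_one hρ0.le hρ1.le (le_max_left _ _)) hJ0)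
  refine ⟨c/(2*J), by positivity, fun P => ?_⟩
  set T : ℕ := max (max P 1) (Nat.ceil (2*r*((N:ℝ)+1)/(r-1))) with hT
  have hTP : P ≤ T := le_trans (le_max_left _ _) (le_max_left _ _)
  have hT1 : 1 ≤ T := le_trans (le_max_right _ _) (le_max_left _ _)
  have hT0 : 2*r*((N:ℝ)+1)/(r-1) ≤ (T:ℝ) :=
    le_trans (Nat.le_ceil _) (Nat.cast_le.mpr (le_max_right _ _))
  obtain ⟨M, hMcnt, hMbig⟩ :=
    (hfreq.and_eventually (Filter.eventually_ge_atTop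
      (max T (Nat.ceil (4*((T:ℝ)+1)/c))))).exists
  have hMT : T ≤ M := le_trans (le_max_left _ _) hMbig
  have hMc : 4*((T:ℝ)+1)/c ≤ M :=
    le_trans (Nat.le_ceil _) (by exact_mod_cast le_trans (le_max_right _ _) hMbig)
  have hM1 : (1:ℝ) ≤ M := by exact_mod_cast le_trans hT1 hMT
  -- the descending sequence
  set x : ℕ → ℕ := fun j => Nat.rec M (fun _ xj => max (Nat.ceil (((xj:ℝ) + N)/r)) T) j
    with hxdef
  have hx0 : x 0 = M := rfl
  have hxs : ∀ j, x (j+1) = max (Nat.ceil (((x j:ℝ) + N)/r)) T := fun j => rfl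
  have hxT : ∀ j, T ≤ x j := by
    intro j
    cases j with
    | zero => exact hMT
    | succ j => rw [hxs]; exact le_max_right _ _
  have hxTr : ∀ j, 2*r*((N:ℝ)+1)/(r-1) ≤ (x j : ℝ) :=
    fun j => le_trans hT0 (by exact_mod_cast hxT j)
  have hstep : ∀ j, ((x j : ℝ) + N) ≤ r * x (j+1) := by
    intro j
    have h1 : (((x j:ℝ) + N)/r) ≤ (x (j+1) : ℝ) := by
      rw [hxs]
      push_cast
      exact le_trans (Nat.le_ceil _) (le_max_left _ _)
    rw [div_le_iff₀ hr0] at h1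
    linarith [mul_comm (x (j+1) : ℝ) r]
  have hdecR : ∀ j, (x (j+1):ℝ) ≤ max (ρ * x j) (T:ℝ) := by
    intro j
    rw [hxs]
    push_cast
    apply max_le_max _ le_rfl
    have h3 : 2*r*((N:ℝ)+1) ≤ ((x j : ℝ)) * (r-1) :=
      (div_le_iff₀ (by linarith)).mp (hxTr j)
    have h2 : (((x j:ℝ) + N)/r) + 1 ≤ ρ * x j := by
      have hρx : ρ * (x j : ℝ) = ((r+1) * (x j : ℝ))/(2*r) := by rw [hρ]; ring
      rw [hρx, div_add' _ _ _ hr0.ne',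
        div_le_div_iff₀ hr0 (by positivity : (0:ℝ) < 2*r)]
      nlinarith [(Nat.cast_nonneg (x j) : (0:ℝ) ≤ (x j : ℝ)), (Nat.cast_nonneg N : (0:ℝ) ≤ (N:ℝ)),
        mul_le_mul_of_nonneg_left h3 hr0.le,
        mul_nonneg (mul_nonneg hr0.le (sub_nonneg.mpr hr.le)) (Nat.cast_nonneg N : (0:ℝ) ≤ (N:ℝ))]
    exact le_trans (le_of_lt (Nat.ceil_lt_add_one (by positivity))) h2
  have hxdec : Antitone x := by
    apply antitone_nat_of_succ_le
    intro j
    have h4 : max (ρ * (x j:ℝ)) (T:ℝ) ≤ (x j : ℝ) := by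
      apply max_le
      · nlinarith [(Nat.cast_nonneg (x j) : (0:ℝ) ≤ (x j : ℝ))]
      · exact_mod_cast hxT j
    exact_mod_cast le_trans (hdecR j) h4
  have hxJ : ∀ j, (x j : ℝ) ≤ max (ρ^j * M) (T:ℝ) := by
    intro j
    induction j with
    | zero => rw [hx0]; simpa using le_max_left (M:ℝ) (T:ℝ)
    | succ j ih =>
      refine le_trans (hdecR j) (max_le ?_ (le_max_right _ _))
      have h5 : ρ * (x j : ℝ) ≤ ρ * max (ρ^j * M) (T:ℝ) :=
        mul_le_mul_of_nonneg_left ih hρ0.le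
      refine le_trans h5 ?_
      rw [mul_max_of_nonneg _ _ hρ0.le]
      apply max_le
      · apply le_max_of_le_left; rw [pow_succ]; ring_nf; exact le_rfl
      · apply le_max_of_le_right; nlinarith [(Nat.cast_nonneg T : (0:ℝ) ≤ (T:ℝ))]
  have hcM4 : (T:ℝ) + 1 ≤ c/4 * M := by
    rw [div_le_iff₀ hc] at hMc
    linarith
  have hxJc : (x J : ℝ) ≤ c/4 * M := by
    apply le_trans (hxJ J)
    apply max_le
    · have := mul_le_mul_of_nonneg_right hJpow (le_of_lt (lt_of_lt_of_le one_pos hM1))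
      linarith [this]
    · linarith
  have hxM : ∀ j, x j ≤ M := fun j => hx0 ▸ hxdec (Nat.zero_le j)
  -- counting: the tail interval carries at least c/2 * M points of A
  have hcover : Finset.range (M+1) ⊆ Finset.range (x J + 1) ∪ Finset.Ioc (x J) M := by
    intro t ht
    simp only [Finset.mem_range, Finset.mem_union, Finset.mem_Ioc] at *
    omega
  have h5 : ((Finset.range (M+1)).filter (· ∈ A)).card ≤
      (x J + 1) + ((Finset.Ioc (x J) M).filter (· ∈ A)).card := by
    calc ((Finset.range (M+1)).filter (· ∈ A)).card
        ≤ ((Finset.range (x J + 1) ∪ Finset.Ioc (x J) M).filter (· ∈ A)).card :=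
          Finset.card_le_card (Finset.filter_subset_filter _ hcover)
      _ = (((Finset.range (x J + 1)).filter (· ∈ A)) ∪
            ((Finset.Ioc (x J) M).filter (· ∈ A))).card := by rw [Finset.filter_union]
      _ ≤ ((Finset.range (x J + 1)).filter (· ∈ A)).card +
            ((Finset.Ioc (x J) M).filter (· ∈ A)).card := Finset.card_union_le _ _
      _ ≤ _ := by
          gcongr
          exact le_trans (Finset.card_filter_le _ _) (by simp)
  have htail : c/2 * M ≤ (((Finset.Ioc (x J) M).filter (· ∈ A)).card : ℝ) := by
    have h5R : (((Finset.range (M+1)).filter (· ∈ A)).card : ℝ) ≤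
        ((x J : ℝ) + 1) + (((Finset.Ioc (x J) M).filter (· ∈ A)).card : ℝ) := by
      exact_mod_cast h5
    linarith [hMcnt, hxJc, hcM4]
  -- pigeonhole over the J sub-intervals
  have hsubsum : ∀ n, (((Finset.Ioc (x n) M).filter (· ∈ A)).card) ≤
      ∑ j ∈ Finset.range n, (((Finset.Ioc (x (j+1)) (x j)).filter (· ∈ A)).card) := by
    intro n
    induction n with
    | zero => simp [hx0]
    | succ n ih =>
      rw [Finset.sum_range_succ]
      have hsub : Finset.Ioc (x (n+1)) M ⊆ Finset.Ioc (x (n+1)) (x n) ∪ Finset.Ioc (x n) M := by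
        intro t ht
        have h1 := hxM n
        simp only [Finset.mem_Ioc, Finset.mem_union] at *
        omega
      calc (((Finset.Ioc (x (n+1)) M).filter (· ∈ A)).card)
          ≤ (((Finset.Ioc (x (n+1)) (x n) ∪ Finset.Ioc (x n) M).filter (· ∈ A)).card) :=
            Finset.card_le_card (Finset.filter_subset_filter _ hsub)
        _ ≤ (((Finset.Ioc (x (n+1)) (x n)).filter (· ∈ A)).card) +
              (((Finset.Ioc (x n) M).filter (· ∈ A)).card) := by
            rw [Finset.filter_union]; exact Finset.card_union_le _ _
        _ ≤ _ := by omega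
  have hsumR : ∑ j ∈ Finset.range J, (c/2 * M / J) ≤
      ∑ j ∈ Finset.range J, ((((Finset.Ioc (x (j+1)) (x j)).filter (· ∈ A)).card : ℝ)) := by
    rw [Finset.sum_const, Finset.card_range, nsmul_eq_mul]
    have : (J:ℝ) * (c/2 * M / J) = c/2 * M := by field_simp
    rw [this]
    refine le_trans htail ?_
    calc (((Finset.Ioc (x J) M).filter (· ∈ A)).card : ℝ)
        ≤ ((∑ j ∈ Finset.range J, (((Finset.Ioc (x (j+1)) (x j)).filter (· ∈ A)).card) : ℕ) : ℝ) := by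
          exact_mod_cast hsubsum J
      _ = _ := by push_cast; ring
  obtain ⟨j, hjJ, hj⟩ := Finset.exists_le_of_sum_le ⟨0, Finset.mem_range.mpr hJ1⟩ hsumR
  refine ⟨x (j+1), x j, le_trans hTP (hxT (j+1)), ?_, hstep j, ?_⟩
  · -- a < b since the interval is nonempty
    have hpos : (0:ℝ) < c/2 * M / J := by positivity
    have hcard : 0 < (((Finset.Ioc (x (j+1)) (x j)).filter (· ∈ A)).card) := by
      rcases Nat.eq_zero_or_pos (((Finset.Ioc (x (j+1)) (x j)).filter (· ∈ A)).card) with h|h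
      · rw [h] at hj; push_cast at hj; linarith
      · exact h
    obtain ⟨t, ht⟩ := Finset.card_pos.mp hcard
    have := (Finset.mem_filter.mp ht).1
    have := Finset.mem_Ioc.mp this
    omega
  · have hxjM : (x j : ℝ) ≤ M := by exact_mod_cast hxM j
    have : c/(2*J) * (x j : ℝ) ≤ c/2 * M / J := by
      rw [div_mul_eq_mul_div, div_le_div_iff₀ (by positivity : (0:ℝ) < 2*J) hJR]
      nlinarith [mul_le_mul_of_nonneg_right
        (mul_le_mul_of_nonneg_left hxjM hc.le) hJR.le]
    linarith

noncomputable def upperDensity (A : Set ℕ) : ℝ :=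
  Filter.limsup
    (fun N : ℕ => (((Finset.range (N + 1)).filter (· ∈ A)).card : ℝ) / (N : ℝ))
    Filter.atTop

theorem stmt_1 (A : Set ℕ) (hA : 0 < upperDensity A) (r : ℝ) (hr : 1 < r)
    (N : ℕ) (hN : 1 ≤ N) :
    ∃ A' : Set ℕ, A' ⊆ A ∧ 0 < upperDensity A' ∧
      ∀ n ∈ A', ∀ m ∈ A', n ≠ m → (N : ℝ) ≤ |(n : ℝ) - r * (m : ℝ)| := by
  have hr0 : (0:ℝ) < r := lt_trans one_pos hr
  have hr1 : (0:ℝ) < r - 1 := by linarith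
  set c := upperDensity A / 2 with hcdef
  have hc : 0 < c := half_pos hA
  have hcob : Filter.IsCoboundedUnder (· ≤ ·) Filter.atTop
      (fun M : ℕ => (((Finset.range (M + 1)).filter (· ∈ A)).card : ℝ) / (M : ℝ)) :=
    Filter.isCoboundedUnder_le_of_le Filter.atTop (x := 0) (fun M => by positivity)
  have hlt : c < Filter.limsup
      (fun M : ℕ => (((Finset.range (M + 1)).filter (· ∈ A)).card : ℝ) / (M : ℝ))
      Filter.atTop := by
    rw [hcdef]
    exact half_lt_self hA
  have hfr := Filter.frequently_lt_of_lt_limsup hcob hlt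
  have hfreq : ∃ᶠ M : ℕ in Filter.atTop,
      c * M ≤ (((Finset.range (M+1)).filter (· ∈ A)).card : ℝ) := by
    refine (hfr.and_eventually (Filter.eventually_ge_atTop 1)).mono ?_
    rintro M ⟨h1, h2⟩
    have hM0 : (0:ℝ) < M := by exact_mod_cast h2
    rw [lt_div_iff₀ hM0] at h1
    linarith
  obtain ⟨c', hc', hkey⟩ := key_lemma A r hr N c hc hfreq
  choose af bf hPa hab hrN hcard using hkey
  -- the chain of blocks
  set g : ℕ → ℕ :=
    fun k => Nat.rec (Nat.ceil ((N:ℝ)/(r-1))) (fun _ p => Nat.ceil (r * (bf p) + N)) k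
    with hgdef
  set a : ℕ → ℕ := fun k => af (g k) with hadef
  set b : ℕ → ℕ := fun k => bf (g k) with hbdef
  have hg0 : (N:ℝ)/(r-1) ≤ (g 0 : ℝ) := Nat.le_ceil _
  have hgs : ∀ k, r * (b k : ℝ) + N ≤ (g (k+1) : ℝ) := fun k => Nat.le_ceil _
  have hab' : ∀ k, a k < b k := fun k => hab (g k)
  have hga : ∀ k, g k ≤ a k := fun k => hPa (g k)
  have hba : ∀ k, b k ≤ a (k+1) := by
    intro k
    have h1 : (b k : ℝ) ≤ r * (b k : ℝ) + N := by
      nlinarith [(Nat.cast_nonneg (b k) : (0:ℝ) ≤ (b k:ℝ)),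
        (Nat.cast_nonneg N : (0:ℝ) ≤ (N:ℝ))]
    have h2 : (b k : ℝ) ≤ (g (k+1) : ℝ) := le_trans h1 (hgs k)
    exact le_trans (Nat.cast_le.mp h2) (hga (k+1))
  have amono : Monotone a :=
    monotone_nat_of_le_succ fun k => le_trans (le_of_lt (hab' k)) (hba k)
  have bstrict : StrictMono b :=
    strictMono_nat_of_lt_succ fun k => lt_of_le_of_lt (hba k) (hab' (k+1))
  have hbk : ∀ k, k ≤ b k := fun k => bstrict.le_apply
  have hb1 : ∀ k, 1 ≤ b k := fun k => Nat.one_le_iff_ne_zero.mpr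
    (by intro h; have := hab' k; omega)
  set A' : Set ℕ := {n | n ∈ A ∧ ∃ k, a k < n ∧ n ≤ b k} with hA'def
  have hsubA : A' ⊆ A := fun n hn => hn.1
  refine ⟨A', hsubA, ?_, ?_⟩
  · -- positive upper density
    have hbdd : Filter.IsBoundedUnder (· ≤ ·) Filter.atTop
        (fun M : ℕ => (((Finset.range (M + 1)).filter (· ∈ A')).card : ℝ) / (M : ℝ)) := by
      refine Filter.isBoundedUnder_of ⟨2, fun M => ?_⟩
      rcases Nat.eq_zero_or_pos M with h|h
      · subst h; simp
      · have hM : (0:ℝ) < M := by exact_mod_cast h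
        rw [div_le_iff₀ hM]
        have h1 : ((Finset.range (M+1)).filter (· ∈ A')).card ≤ M + 1 :=
          le_trans (Finset.card_filter_le _ _) (by simp)
        have h2 : (((Finset.range (M+1)).filter (· ∈ A')).card : ℝ) ≤ M + 1 := by
          exact_mod_cast h1
        have h3 : (1:ℝ) ≤ M := by exact_mod_cast h
        linarith
    have hfreq' : ∃ᶠ M : ℕ in Filter.atTop,
        c' ≤ (((Finset.range (M + 1)).filter (· ∈ A')).card : ℝ) / (M : ℝ) := by
      rw [Filter.frequently_atTop]
      intro Q
      refine ⟨b Q, hbk Q, ?_⟩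
      have hsub : (Finset.Ioc (a Q) (b Q)).filter (· ∈ A) ⊆
          (Finset.range (b Q + 1)).filter (· ∈ A') := by
        intro t ht
        simp only [Finset.mem_filter, Finset.mem_Ioc, Finset.mem_range] at *
        exact ⟨by omega, ht.2, Q, ht.1.1, ht.1.2⟩
      have hcd := Finset.card_le_card hsub
      have hbQ : (0:ℝ) < b Q := by exact_mod_cast lt_of_lt_of_le one_pos (hb1 Q)
      rw [le_div_iff₀ hbQ]
      calc c' * (b Q : ℝ) ≤ (((Finset.Ioc (a Q) (b Q)).filter (· ∈ A)).card : ℝ) :=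
            hcard (g Q)
        _ ≤ _ := by exact_mod_cast hcd
    have hle := Filter.le_limsup_of_frequently_le hfreq' hbdd
    unfold upperDensity
    refine lt_of_lt_of_le hc' ?_
    convert hle using 2
    congr!
  · -- separation
    rintro n ⟨hnA, k, hk1, hk2⟩ m ⟨hmA, l, hl1, hl2⟩ hnm
    have hm1 : (N:ℝ) ≤ (r - 1) * m := by
      have h1 : g 0 ≤ a 0 := hga 0
      have h2 : a 0 ≤ a l := amono (Nat.zero_le l)
      have h3 : (a l : ℝ) < m := by exact_mod_cast hl1
      have h4 : (N:ℝ)/(r-1) ≤ (m:ℝ) := by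
        refine le_trans hg0 ?_
        have : (g 0 : ℝ) ≤ (a l : ℝ) := by exact_mod_cast le_trans h1 h2
        linarith
      rw [div_le_iff₀ hr1] at h4
      linarith
    rcases lt_trichotomy n m with h|h|h
    · -- n < m
      have hnm' : (n:ℝ) + 1 ≤ m := by exact_mod_cast h
      refine le_abs.mpr (Or.inr ?_)
      have : (0:ℝ) ≤ (n:ℝ) := Nat.cast_nonneg n
      nlinarith
    · exact absurd h hnm
    · -- m < n
      rcases lt_trichotomy k l with hkl|hkl|hkl
      · exfalso
        have h1 := hba k
        have h2 : a (k+1) ≤ a l := amono hkl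
        omega
      · subst hkl
        -- same block : n ≤ b k, m ≥ a k + 1
        have h1 : (b k : ℝ) + N ≤ r * (a k : ℝ) := hrN (g k)
        have h2 : ((a k : ℝ) + 1) ≤ m := by exact_mod_cast hl1
        have h3 : (n : ℝ) ≤ (b k : ℝ) := by exact_mod_cast hk2
        have h4 : r * ((a k : ℝ) + 1) ≤ r * m := mul_le_mul_of_nonneg_left h2 hr0.le
        refine le_abs.mpr (Or.inr ?_)
        nlinarith
      · -- k > l : n is far above
        have h1 : a (l+1) ≤ a k := amono hkl
        have h2 : (g (l+1) : ℝ) ≤ a (l+1) := by exact_mod_cast hga (l+1)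
        have h3 : r * (b l : ℝ) + N ≤ (g (l+1) : ℝ) := hgs l
        have h4 : (m : ℝ) ≤ (b l : ℝ) := by exact_mod_cast hl2
        have h5 : r * (m:ℝ) ≤ r * (b l : ℝ) := mul_le_mul_of_nonneg_left h4 hr0.le
        have h6 : (a k : ℝ) + 1 ≤ n := by exact_mod_cast hk1
        have h7 : (a (l+1) : ℝ) ≤ (a k : ℝ) := by exact_mod_cast h1
        refine le_abs.mpr (Or.inl ?_)
        linarith
end

section
/- Let M ≥ 2 be an integer and r > 1 a real number. Then the set B = ℕ ∩ ⋃_{j≥1} (M^j r^j, M^j r^{j+1} - j) has positive lower density. -/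
open scoped Classical

/-!
Put `t = M r > 1`, so the `j`-th interval is `(t ^ j, r t ^ j - j)`. Given a large `N`, choose `j`
with `r t ^ j ≤ N < r t ^ (j + 1)`. The `j`-th interval then lies below `N` and contains at least
`(r - 1) t ^ j - j - 1 ≥ (r - 1) t ^ j / 2` integers, which is a fixed proportion of `N`.
-/

open Filter Asymptotics

lemma isCoboundedUnder_ge_card_filter_div (A : Set ℕ) :
    IsCoboundedUnder (· ≥ ·) atTop
      (fun N : ℕ => (((Finset.range (N + 1)).filter (· ∈ A)).card : ℝ) / (N : ℝ)) := by
  refine isCoboundedUnder_ge_of_eventually_le atTop (x := 2) ?_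
  filter_upwards [eventually_ge_atTop 1] with N hN
  have hN' : (1 : ℝ) ≤ N := by exact_mod_cast hN
  have hcard : (((Finset.range (N + 1)).filter (· ∈ A)).card : ℝ) ≤ N + 1 := by
    exact_mod_cast (Finset.card_filter_le _ _).trans (Finset.card_range _).le
  rw [div_le_iff₀ (by positivity)]
  linarith

lemma le_lowerDensity_of_eventually {A : Set ℕ} {c : ℝ}
    (h : ∀ᶠ N : ℕ in atTop, c * N ≤ (((Finset.range (N + 1)).filter (· ∈ A)).card : ℝ)) :
    c ≤ lowerDensity A := by
  refine le_liminf_of_le (isCoboundedUnder_ge_card_filter_div A) ?_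
  filter_upwards [h, eventually_gt_atTop 0] with N hN hN0
  rwa [le_div_iff₀ (by exact_mod_cast hN0)]

lemma sub_sub_one_le_card_filter {A : Set ℕ} {x y : ℝ} {N : ℕ} (hx : 0 ≤ x) (hyN : y ≤ N)
    (hA : ∀ n : ℕ, x < n → (n : ℝ) < y → n ∈ A) :
    y - x - 1 ≤ (((Finset.range (N + 1)).filter (· ∈ A)).card : ℝ) := by
  have hsub : Finset.Ioo ⌊x⌋₊ ⌈y⌉₊ ⊆ (Finset.range (N + 1)).filter (· ∈ A) := by
    intro n hn
    obtain ⟨hxn, hny⟩ := Finset.mem_Ioo.mp hn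
    rw [Nat.floor_lt hx] at hxn
    rw [Nat.lt_ceil] at hny
    have hnN : (n : ℝ) < N + 1 := by linarith
    exact Finset.mem_filter.mpr ⟨Finset.mem_range.mpr (by exact_mod_cast hnN), hA n hxn hny⟩
  have hIoo : ⌈y⌉₊ ≤ (Finset.Ioo ⌊x⌋₊ ⌈y⌉₊).card + ⌊x⌋₊ + 1 := by
    rw [Nat.card_Ioo]; omega
  have hIoo' : (⌈y⌉₊ : ℝ) ≤ (Finset.Ioo ⌊x⌋₊ ⌈y⌉₊).card + ⌊x⌋₊ + 1 := by exact_mod_cast hIoo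
  have hcard : ((Finset.Ioo ⌊x⌋₊ ⌈y⌉₊).card : ℝ) ≤
      ((Finset.range (N + 1)).filter (· ∈ A)).card := by
    exact_mod_cast Finset.card_le_card hsub
  linarith [Nat.le_ceil y, Nat.floor_le hx]

lemma eventually_add_one_le_mul_pow {t c : ℝ} (ht : 1 < t) (hc : 0 < c) :
    ∀ᶠ j : ℕ in atTop, (j : ℝ) + 1 ≤ c * t ^ j := by
  have ht0 : 0 < t := zero_lt_one.trans ht
  have h1 : (fun _ : ℕ => (1 : ℝ)) =o[atTop] fun j => t ^ j :=
    (isLittleO_one_left_iff ℝ).mpr <| by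
      simpa [abs_of_pos ht0] using tendsto_pow_atTop_atTop_of_one_lt ht
  filter_upwards [((isLittleO_coe_const_pow_of_one_lt ht).add h1).bound hc] with j hj
  simpa [abs_of_pos ht0, abs_of_nonneg (by positivity : (0 : ℝ) ≤ j + 1)] using hj

lemma exists_mul_pow_le_lt_mul_pow_succ {a t x : ℝ} (ha : 0 < a) (ht : 1 < t) {J : ℕ}
    (hJ : a * t ^ J ≤ x) : ∃ j, J ≤ j ∧ a * t ^ j ≤ x ∧ x < a * t ^ (j + 1) := by
  have haJ : 0 < a * t ^ J := by positivity
  obtain ⟨n, hle, hlt⟩ := exists_nat_pow_near ((one_le_div haJ).mpr hJ) ht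
  refine ⟨J + n, Nat.le_add_right J n, ?_, ?_⟩
  · rw [le_div_iff₀ haJ] at hle
    calc a * t ^ (J + n) = t ^ n * (a * t ^ J) := by ring
      _ ≤ x := hle
  · rw [div_lt_iff₀ haJ] at hlt
    calc x < t ^ (n + 1) * (a * t ^ J) := hlt
      _ = a * t ^ (J + n + 1) := by ring

theorem stmt_3 (M : ℕ) (hM : 2 ≤ M) (r : ℝ) (hr : 1 < r) :
    0 < lowerDensity
      {n : ℕ | ∃ j : ℕ, 1 ≤ j ∧
        (M : ℝ) ^ j * r ^ j < (n : ℝ) ∧ (n : ℝ) < (M : ℝ) ^ j * r ^ (j + 1) - (j : ℝ)} := by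
  have hr0 : 0 < r := zero_lt_one.trans hr
  have hM1 : (1 : ℝ) < M := by exact_mod_cast hM
  set t : ℝ := M * r
  have ht : 1 < t := one_lt_mul_of_lt_of_le hM1 hr.le
  have hc : 0 < (r - 1) / (2 * r * t) := div_pos (by linarith) (by positivity)
  refine hc.trans_le (le_lowerDensity_of_eventually ?_)
  obtain ⟨J, hJ⟩ := eventually_atTop.mp (eventually_add_one_le_mul_pow ht (half_pos (sub_pos.2 hr)))
  filter_upwards [eventually_ge_atTop ⌈r * t ^ (J + 1)⌉₊] with N hN
  obtain ⟨j, hJj, hjN, hNj⟩ := exists_mul_pow_le_lt_mul_pow_succ hr0 ht (Nat.ceil_le.mp hN)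
  calc (r - 1) / (2 * r * t) * N ≤ (r - 1) / (2 * r * t) * (r * t ^ (j + 1)) := by gcongr
    _ = (r - 1) / 2 * t ^ j := by field_simp; ring
    _ ≤ r * t ^ j - j - t ^ j - 1 := by linarith [hJ j (by omega)]
    _ ≤ _ := sub_sub_one_le_card_filter (by positivity) (by linarith [j.cast_nonneg (α := ℝ)])
      fun n hxn hny => by
        exact ⟨j, by omega, by rwa [← mul_pow],
          by rwa [pow_succ, ← mul_assoc, ← mul_pow, mul_comm _ r]⟩
end

section
/- Let (n_k)_{k≥1} be a strictly increasing sequence of natural numbers and M ≥ 1 an integer such that n_{k+1} ≥ n_k + (k+1)·M for every k ≥ 1. Then the set A = {n_k + k'·M : k ≥ 1, 0 ≤ k' ≤ k} has positive upper Banach density. -/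
open scoped Classical

noncomputable def upperBanachDensity (A : Set ℕ) : ℝ :=
  Filter.limsup
    (fun N : ℕ =>
      ⨆ k : ℕ, (((Finset.Icc (k + 1) (k + N)).filter (· ∈ A)).card : ℝ) / (N : ℝ))
    Filter.atTop

theorem stmt_4 (n : ℕ → ℕ) (hn : StrictMono n) (M : ℕ) (hM : 1 ≤ M)
    (h : ∀ k, 1 ≤ k → n k + (k + 1) * M ≤ n (k + 1)) :
    0 < upperBanachDensity
      {m : ℕ | ∃ k, 1 ≤ k ∧ ∃ k', k' ≤ k ∧ m = n k + k' * M} := by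
  set A : Set ℕ := {m : ℕ | ∃ k, 1 ≤ k ∧ ∃ k', k' ≤ k ∧ m = n k + k' * M} with hA
  set f : ℕ → ℝ := fun N =>
      ⨆ k : ℕ, (((Finset.Icc (k + 1) (k + N)).filter (· ∈ A)).card : ℝ) / (N : ℝ) with hf
  -- each term is ≤ 1
  have hterm_le : ∀ N k : ℕ,
      (((Finset.Icc (k + 1) (k + N)).filter (· ∈ A)).card : ℝ) / (N : ℝ) ≤ 1 := by
    intro N k
    rcases Nat.eq_zero_or_pos N with hN | hN
    · subst hN; simp
    · rw [div_le_one (by positivity)]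
      have : ((Finset.Icc (k + 1) (k + N)).filter (· ∈ A)).card ≤ N := by
        calc ((Finset.Icc (k + 1) (k + N)).filter (· ∈ A)).card
            ≤ (Finset.Icc (k + 1) (k + N)).card := Finset.card_filter_le _ _
          _ = N := by rw [Nat.card_Icc]; omega
      exact_mod_cast this
  have hbdd : ∀ N : ℕ, BddAbove (Set.range fun k : ℕ =>
      (((Finset.Icc (k + 1) (k + N)).filter (· ∈ A)).card : ℝ) / (N : ℝ)) := by
    intro N
    exact ⟨1, by rintro x ⟨k, rfl⟩; exact hterm_le N k⟩
  have hfle : ∀ N, f N ≤ 1 := fun N => ciSup_le (hterm_le N)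
  have hM0 : (0:ℝ) < M := by exact_mod_cast hM
  -- main lower bound eventually
  have hev : ∀ᶠ N in Filter.atTop, 1 / (2 * (M:ℝ)) ≤ f N := by
    filter_upwards [Filter.eventually_ge_atTop (2 * M)] with N hN
    have hN1 : 1 ≤ N := le_trans (by omega) hN
    have hNpos : (0:ℝ) < N := by exact_mod_cast hN1
    -- the window starting at n N contains the points n N + k' * M, 1 ≤ k' ≤ N / M
    have hcard : N / M ≤ ((Finset.Icc (n N + 1) (n N + N)).filter (· ∈ A)).card := by
      have hinj : Set.InjOn (fun k' => n N + k' * M) (Finset.Icc 1 (N / M)) := by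
        intro a _ b _ hab
        simp only at hab
        have : a * M = b * M := by omega
        exact Nat.eq_of_mul_eq_mul_right (by omega) this
      have hmaps : ∀ a ∈ Finset.Icc 1 (N / M),
          (fun k' => n N + k' * M) a ∈ (Finset.Icc (n N + 1) (n N + N)).filter (· ∈ A) := by
        intro a ha
        simp only [Finset.mem_Icc] at ha
        have haM : a * M ≤ N := (Nat.le_div_iff_mul_le (by omega)).mp ha.2
        have haN : a ≤ N := le_trans (Nat.le_mul_of_pos_right a (by omega)) haM
        simp only [Finset.mem_filter, Finset.mem_Icc]
        have h1aM : 1 ≤ a * M := Nat.mul_pos (by omega) (by omega)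
        refine ⟨⟨?_, ?_⟩, ⟨N, hN1, a, haN, rfl⟩⟩
        · omega
        · omega
      calc N / M = (Finset.Icc 1 (N / M)).card := by simp
        _ ≤ _ := Finset.card_le_card_of_injOn _ hmaps hinj
    -- so the term at k = n N is at least (N/M)/N ≥ 1/(2M)
    have h1 : ((N / M : ℕ) : ℝ) / (N : ℝ) ≤
        (((Finset.Icc (n N + 1) (n N + N)).filter (· ∈ A)).card : ℝ) / (N : ℝ) := by
      have : ((N / M : ℕ) : ℝ) ≤ (((Finset.Icc (n N + 1) (n N + N)).filter (· ∈ A)).card : ℝ) := by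
        exact_mod_cast hcard
      gcongr
    have h1' : (((Finset.Icc (n N + 1) (n N + N)).filter (· ∈ A)).card : ℝ) / (N : ℝ) ≤ f N :=
      le_ciSup (hbdd N) (n N)
    have hlink := h1.trans h1'
    have h2 : 1 / (2 * (M:ℝ)) ≤ ((N / M : ℕ) : ℝ) / (N : ℝ) := by
      rw [div_le_div_iff₀ (by positivity) hNpos]
      have hmod : N % M < M := Nat.mod_lt _ (by omega)
      have hdiv : M * (N / M) + N % M = N := Nat.div_add_mod N M
      have hmodR : ((N % M : ℕ) : ℝ) < M := by exact_mod_cast hmod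
      have hdivR : (M : ℝ) * ((N / M : ℕ) : ℝ) + ((N % M : ℕ) : ℝ) = N := by exact_mod_cast hdiv
      have hNR : 2 * (M : ℝ) ≤ N := by exact_mod_cast hN
      nlinarith [hmodR, hdivR, hNR]
    exact h2.trans hlink
  have hle : 1 / (2 * (M:ℝ)) ≤ upperBanachDensity A := by
    exact Filter.le_limsup_of_frequently_le hev.frequently
      (Filter.isBoundedUnder_of ⟨1, hfle⟩)
  calc (0:ℝ) < 1 / (2 * M) := by positivity
    _ ≤ _ := hle
end

section
/- Let 0 < α ≤ 1, J, M ≥ 1 be integers, and let (n_k)_{k≥1} be a strictly increasing sequence of natural numbers tending to infinity. Then the set A = {n_k + r(J+M) : k ≥ 1, r ∈ ℕ, 0 ≤ r ≤ (α·n_k - J)/(J+M)} has upper density at least α/((1+α)(J+M)). -/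
open scoped Classical

theorem stmt_5 (α : ℝ) (hα0 : 0 < α) (hα1 : α ≤ 1) (J M : ℕ) (hJ : 1 ≤ J) (hM : 1 ≤ M)
    (n : ℕ → ℕ) (hn : StrictMono n)
    (hlim : Filter.Tendsto n Filter.atTop Filter.atTop) :
    α / ((1 + α) * (J + M : ℝ)) ≤ upperDensity
      {m : ℕ | ∃ k, 1 ≤ k ∧ ∃ r : ℕ,
        (r : ℝ) ≤ (α * (n k : ℝ) - (J : ℝ)) / ((J : ℝ) + (M : ℝ)) ∧
        m = n k + r * (J + M)} := by
  set A : Set ℕ := {m : ℕ | ∃ k, 1 ≤ k ∧ ∃ r : ℕ,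
        (r : ℝ) ≤ (α * (n k : ℝ) - (J : ℝ)) / ((J : ℝ) + (M : ℝ)) ∧
        m = n k + r * (J + M)} with hA
  set u : ℕ → ℝ := fun N : ℕ =>
    (((Finset.range (N + 1)).filter (· ∈ A)).card : ℝ) / (N : ℝ) with hu
  have hJ1 : (1:ℝ) ≤ (J:ℝ) := by exact_mod_cast hJ
  have hM1 : (1:ℝ) ≤ (M:ℝ) := by exact_mod_cast hM
  have hPr : (0:ℝ) < (J:ℝ) + (M:ℝ) := by linarith
  have hbdd : Filter.IsBoundedUnder (· ≤ ·) Filter.atTop u := by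
    refine Filter.isBoundedUnder_of ⟨2, fun N => ?_⟩
    rcases Nat.eq_zero_or_pos N with h | h
    · simp [hu, h]
    · have hcard : (((Finset.range (N + 1)).filter (· ∈ A)).card : ℝ) ≤ (N:ℝ) + 1 := by
        have := (Finset.card_filter_le (Finset.range (N+1)) (· ∈ A))
        rw [Finset.card_range] at this
        exact_mod_cast this
      have hN : (1:ℝ) ≤ (N:ℝ) := by exact_mod_cast h
      have hN0 : (0:ℝ) < (N:ℝ) := by linarith
      rw [hu]
      rw [div_le_iff₀ hN0]
      linarith
  unfold upperDensity
  apply le_of_forall_sub_le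
  intro ε hε
  apply Filter.le_limsup_of_frequently_le _ hbdd
  rw [Filter.frequently_atTop]
  intro m
  -- choose large k
  have hlimR : Filter.Tendsto (fun k => ((n k : ℕ) : ℝ)) Filter.atTop Filter.atTop :=
    tendsto_natCast_atTop_atTop.comp hlim
  have hev : ∀ᶠ k in Filter.atTop, 1 ≤ k ∧ m ≤ n k ∧ (J:ℝ) ≤ α * (n k : ℝ) ∧
      (J:ℝ) ≤ ε * (((J:ℝ) + (M:ℝ)) * (1 + α)) * (n k : ℝ) := by
    have h1 : ∀ᶠ k in Filter.atTop, 1 ≤ k := Filter.eventually_ge_atTop 1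
    have h2 : ∀ᶠ k in Filter.atTop, m ≤ n k := hlim.eventually_ge_atTop m
    have h3 : ∀ᶠ k in Filter.atTop, (J:ℝ)/α ≤ (n k : ℝ) := hlimR.eventually_ge_atTop _
    have h4 : ∀ᶠ k in Filter.atTop,
        (J:ℝ)/(ε * (((J:ℝ) + (M:ℝ)) * (1 + α))) ≤ (n k : ℝ) := hlimR.eventually_ge_atTop _
    filter_upwards [h1, h2, h3, h4] with k hk1 hk2 hk3 hk4
    refine ⟨hk1, hk2, ?_, ?_⟩
    · rwa [div_le_iff₀ hα0, mul_comm] at hk3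
    · have hpos : 0 < ε * (((J:ℝ) + (M:ℝ)) * (1 + α)) := by positivity
      rwa [div_le_iff₀ hpos, mul_comm] at hk4
  obtain ⟨k, hk1, hkm, hkJ, hkε⟩ := hev.exists
  set x : ℝ := (α * (n k : ℝ) - (J:ℝ)) / ((J:ℝ) + (M:ℝ)) with hx
  have hx0 : 0 ≤ x := div_nonneg (by linarith) hPr.le
  set R : ℕ := ⌊x⌋₊ with hR
  set N : ℕ := n k + R * (J + M) with hN
  have hnk0 : (0:ℝ) < (n k : ℝ) := by nlinarith
  have hnkpos : 0 < n k := by exact_mod_cast hnk0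
  refine ⟨N, le_trans hkm (by omega), ?_⟩
  -- counting
  have hsub : (Finset.range (R + 1)).image (fun r => n k + r * (J + M)) ⊆
      (Finset.range (N + 1)).filter (· ∈ A) := by
    intro y hy
    simp only [Finset.mem_image, Finset.mem_range] at hy
    obtain ⟨r, hr, rfl⟩ := hy
    have hrR : r ≤ R := Nat.lt_succ_iff.mp hr
    rw [Finset.mem_filter, Finset.mem_range]
    constructor
    · have : r * (J + M) ≤ R * (J + M) := Nat.mul_le_mul_right _ hrR
      omega
    · exact ⟨k, hk1, r, (Nat.le_floor_iff hx0).mp hrR, rfl⟩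
  have hinj : ((Finset.range (R + 1)).image (fun r => n k + r * (J + M))).card = R + 1 := by
    rw [Finset.card_image_of_injective _ ?_, Finset.card_range]
    intro a b hab
    simp only at hab
    have := Nat.add_left_cancel hab
    exact Nat.eq_of_mul_eq_mul_right (by omega) this
  have hcard : (R:ℝ) + 1 ≤ (((Finset.range (N + 1)).filter (· ∈ A)).card : ℝ) := by
    have := Finset.card_le_card hsub
    rw [hinj] at this
    exact_mod_cast this
  -- analytic estimates
  have hRx : (R:ℝ) ≤ x := Nat.floor_le hx0
  have hxR : x < (R:ℝ) + 1 := Nat.lt_floor_add_one x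
  have hNr : (N:ℝ) = (n k : ℝ) + (R:ℝ) * ((J:ℝ) + (M:ℝ)) := by
    rw [hN]; push_cast; ring
  have hN0 : (0:ℝ) < (N:ℝ) := by rw [hNr]; nlinarith
  have hNle : (N:ℝ) ≤ (1 + α) * (n k : ℝ) := by
    rw [hNr]
    have : (R:ℝ) * ((J:ℝ) + (M:ℝ)) ≤ x * ((J:ℝ) + (M:ℝ)) :=
      mul_le_mul_of_nonneg_right hRx hPr.le
    have hxP : x * ((J:ℝ) + (M:ℝ)) = α * (n k : ℝ) - (J:ℝ) := by
      rw [hx]; field_simp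
    nlinarith
  have hD : (0:ℝ) < (1 + α) * (n k : ℝ) := by positivity
  have step1 : ((R:ℝ) + 1) / (N:ℝ) ≤ u N := by
    rw [hu]
    exact (div_le_div_iff_of_pos_right hN0).mpr hcard
  have step2 : x / ((1 + α) * (n k : ℝ)) ≤ ((R:ℝ) + 1) / (N:ℝ) :=
    div_le_div₀ (by positivity) hxR.le hN0 hNle
  have key : (α / ((1 + α) * ((J:ℝ) + (M:ℝ))) - ε) * ((1 + α) * (n k : ℝ)) ≤ x := by
    have hexp : (α / ((1 + α) * ((J:ℝ) + (M:ℝ)))) * ((1 + α) * (n k : ℝ))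
        = α * (n k : ℝ) / ((J:ℝ) + (M:ℝ)) := by
      field_simp
    have h2 : x = α * (n k : ℝ) / ((J:ℝ) + (M:ℝ)) - (J:ℝ) / ((J:ℝ) + (M:ℝ)) := by
      rw [hx]; ring
    have h3 : (J:ℝ) / ((J:ℝ) + (M:ℝ)) ≤ ε * ((1 + α) * (n k : ℝ)) := by
      rw [div_le_iff₀ hPr]
      calc (J:ℝ) ≤ ε * (((J:ℝ) + (M:ℝ)) * (1 + α)) * (n k : ℝ) := hkε
        _ = ε * ((1 + α) * (n k : ℝ)) * ((J:ℝ) + (M:ℝ)) := by ring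
    rw [sub_mul, hexp, h2]
    linarith
  have step3 : α / ((1 + α) * ((J:ℝ) + (M:ℝ))) - ε ≤ x / ((1 + α) * (n k : ℝ)) :=
    (le_div_iff₀ hD).mpr key
  exact step3.trans (step2.trans step1)
end

section
/- Let X = ℓ^p(ℕ) with 1 ≤ p < ∞ or X = c₀(ℕ), let T = T_{f,w} be a unilateral pseudo-shift on X, and fix j ≥ 1. Define φ : X → X by φ(x) = Σ_{k≥1} x_{f^{k-1}(j)} e_k and let B_v be the unilateral weighted backward shift with weights v_n = w_{f^{n-1}(j)}. Then φ is a bounded linear operator with dense range and φ ∘ T = B_v ∘ φ. -/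
/-!
Because `f` is strictly increasing with `f 0 > 0`, we have `j < f j`, so the orbit `k ↦ f^[k] j`
is strictly increasing and in particular injective. Hence `φ` is precomposition with an injective
map. On `ℓ^p` (including `p = ∞`) and on `c₀` such a map is a contraction, and it is onto
because extending by zero gives a preimage. The intertwining relation `φ ∘ T = B_v ∘ φ` is
the coordinate identity `f (f^[k] j) = f^[k+1] j`.
-/

open scoped ENNReal ZeroAtInfty
open Filter Function Topology

theorem Function.Injective.extend_zero_preimage_subset {α β γ : Type*} [Zero γ] {g : β → α}
    (hg : Injective g) (y : β → γ) {S : Set γ} (hS : (0 : γ) ∉ S) :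
    extend g y 0 ⁻¹' S ⊆ g '' (y ⁻¹' S) := by
  intro n hn
  by_cases h : ∃ k, g k = n
  · obtain ⟨k, rfl⟩ := h
    exact ⟨k, by rwa [Set.mem_preimage, hg.extend_apply] at hn, rfl⟩
  · rw [Set.mem_preimage, extend_apply' y (0 : α → γ) n h] at hn
    exact absurd hn hS

theorem Filter.Tendsto.extend_zero_cofinite {α β E : Type*} [TopologicalSpace E] [Zero E]
    {g : β → α} (hg : Injective g) {y : β → E} (hy : Tendsto y cofinite (𝓝 0)) :
    Tendsto (extend g y 0) cofinite (𝓝 0) := fun U hU =>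
  ((hy hU).image g).subset
    (hg.extend_zero_preimage_subset y (S := Uᶜ) (not_not_intro (mem_of_mem_nhds hU)))

section Memℓp

variable {α β : Type*} {p : ℝ≥0∞} {g : β → α}

theorem Memℓp.comp_injective {E : α → Type*} [∀ i, NormedAddCommGroup (E i)] {x : ∀ i, E i}
    (hx : Memℓp x p) (hg : Injective g) : Memℓp (fun k => x (g k)) p := by
  rcases p.trichotomy with rfl | rfl | hp
  · exact memℓp_zero ((memℓp_zero_iff.1 hx).preimage hg.injOn)
  · exact memℓp_infty (hx.bddAbove.mono (Set.range_comp_subset_range g fun i => ‖x i‖))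
  · exact memℓp_gen ((hx.summable hp).comp_injective hg)

theorem Memℓp.extend_zero {E : Type*} [NormedAddCommGroup E] {y : β → E} (hy : Memℓp y p)
    (hg : Injective g) : Memℓp (extend g y 0) p := by
  rcases p.trichotomy with rfl | rfl | hp
  · exact memℓp_zero (((memℓp_zero_iff.1 hy).image g).subset
      (hg.extend_zero_preimage_subset y (S := {0}ᶜ) (not_not_intro rfl)))
  · obtain ⟨C, hC⟩ := hy.bddAbove
    refine memℓp_infty ⟨max C 0, ?_⟩
    rintro _ ⟨n, rfl⟩
    by_cases h : ∃ k, g k = n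
    · obtain ⟨k, rfl⟩ := h
      simpa only [hg.extend_apply] using (hC ⟨k, rfl⟩).trans (le_max_left C 0)
    · simp [extend_apply' y (0 : α → E) n h]
  · have hnorm : (fun n => ‖extend g y 0 n‖ ^ p.toReal) =
        extend g (fun k => ‖y k‖ ^ p.toReal) 0 := by
      funext n
      rw [apply_extend (fun z : E => ‖z‖ ^ p.toReal)]
      congr 1
      funext _
      simp [Real.zero_rpow hp.ne']
    exact memℓp_gen (hnorm ▸ (summable_extend_zero hg).2 (hy.summable hp))

end Memℓp

namespace lp

variable {α β 𝕜 E : Type*} [NormedField 𝕜] [NormedAddCommGroup E] [NormedSpace 𝕜 E]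
  {p : ℝ≥0∞} [Fact (1 ≤ p)] {g : β → α}

noncomputable def compRightCLM (g : β → α) (hg : Injective g) :
    lp (fun _ : α => E) p →L[𝕜] lp (fun _ : β => E) p :=
  LinearMap.mkContinuous
    { toFun := fun x => ⟨fun k => x (g k), (lp.memℓp x).comp_injective hg⟩
      map_add' := fun _ _ => rfl
      map_smul' := fun _ _ => rfl }
    1 fun x => by
      rw [one_mul]
      rcases eq_or_ne p ∞ with rfl | hp
      · exact norm_le_of_forall_le (norm_nonneg x) fun k =>
          norm_apply_le_norm ENNReal.top_ne_zero x (g k)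
      · have hpt : 0 < p.toReal := ENNReal.toReal_pos (zero_lt_one.trans_le Fact.out).ne' hp
        refine norm_le_of_tsum_le hpt (norm_nonneg x) ?_
        rw [norm_rpow_eq_tsum hpt x]
        exact tsum_comp_le_tsum_of_inj ((lp.memℓp x).summable hpt) (fun i => by positivity) hg

@[simp]
theorem compRightCLM_apply (hg : Injective g) (x : lp (fun _ : α => E) p) (k : β) :
    compRightCLM (𝕜 := 𝕜) g hg x k = x (g k) :=
  rfl

theorem compRightCLM_surjective (hg : Injective g) :
    Surjective (compRightCLM (𝕜 := 𝕜) (E := E) (p := p) g hg) := fun y =>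
  ⟨⟨extend g y 0, (lp.memℓp y).extend_zero hg⟩,
    lp.ext (funext fun k => hg.extend_apply y 0 k)⟩

end lp

@[simps]
def CocompactMap.ofInjective {α β : Type*} [TopologicalSpace α] [DiscreteTopology α]
    [TopologicalSpace β] [DiscreteTopology β] (g : β → α) (hg : Injective g) :
    CocompactMap β α where
  toFun := g
  continuous_toFun := continuous_of_discreteTopology
  cocompact_tendsto' := by simpa only [cocompact_eq_cofinite] using hg.tendsto_cofinite

namespace ZeroAtInftyContinuousMap

variable {α β 𝕜 E : Type*} [TopologicalSpace α] [TopologicalSpace β] [NormedField 𝕜]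
  [NormedAddCommGroup E] [NormedSpace 𝕜 E]

noncomputable def compCLM (g : CocompactMap β α) : C₀(α, E) →L[𝕜] C₀(β, E) :=
  (compLinearMap g).mkContinuous 1 fun x => by
    rw [one_mul, ← norm_toBCF_eq_norm, ← norm_toBCF_eq_norm]
    exact (BoundedContinuousFunction.norm_le (norm_nonneg _)).2 fun b =>
      x.toBCF.norm_coe_le_norm (g b)

@[simp]
theorem compCLM_apply (g : CocompactMap β α) (x : C₀(α, E)) (k : β) :
    compCLM (𝕜 := 𝕜) g x k = x (g k) :=
  rfl

theorem compCLM_ofInjective_surjective [DiscreteTopology α] [DiscreteTopology β] {g : β → α}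
    (hg : Injective g) :
    Surjective (compCLM (𝕜 := 𝕜) (E := E) (CocompactMap.ofInjective g hg)) := fun y =>
  ⟨⟨⟨extend g y 0, continuous_of_discreteTopology⟩, by
    simpa only [cocompact_eq_cofinite] using
      (cocompact_eq_cofinite β ▸ y.zero_at_infty').extend_zero_cofinite hg⟩,
    ext fun k => hg.extend_apply y 0 k⟩

end ZeroAtInftyContinuousMap

theorem stmt_8_general (p : ℝ≥0∞) [Fact (1 ≤ p)]
    (f : ℕ → ℕ) (hf : StrictMono f) (hf0 : 0 < f 0)
    (w : ℕ → ℂ) (j : ℕ)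
    (v : ℕ → ℂ) (hv : ∀ n, v n = w (f^[n] j)) :
    (∀ T Bv : lp (fun _ : ℕ => ℂ) p →L[ℂ] lp (fun _ : ℕ => ℂ) p,
      (∀ x k, T x k = w (f k) * x (f k)) →
      (∀ x k, Bv x k = v (k + 1) * x (k + 1)) →
      ∃ φ : lp (fun _ : ℕ => ℂ) p →L[ℂ] lp (fun _ : ℕ => ℂ) p,
        (∀ x k, φ x k = x (f^[k] j)) ∧ DenseRange φ ∧
        ∀ x, φ (T x) = Bv (φ x)) ∧
    (∀ T Bv : ZeroAtInftyContinuousMap ℕ ℂ →L[ℂ] ZeroAtInftyContinuousMap ℕ ℂ,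
      (∀ x k, T x k = w (f k) * x (f k)) →
      (∀ x k, Bv x k = v (k + 1) * x (k + 1)) →
      ∃ φ : ZeroAtInftyContinuousMap ℕ ℂ →L[ℂ] ZeroAtInftyContinuousMap ℕ ℂ,
        (∀ x k, φ x k = x (f^[k] j)) ∧ DenseRange φ ∧
        ∀ x, φ (T x) = Bv (φ x)) := by
  have hj : j < f j := by simpa using (hf.add_le_nat j 0).trans_lt' (by omega)
  have hg : Injective fun k => f^[k] j := (hf.strictMono_iterate_of_lt_map hj).injective
  have hcoord (x : ℕ → ℂ) (k : ℕ) :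
      w (f (f^[k] j)) * x (f (f^[k] j)) = v (k + 1) * x (f^[k + 1] j) := by
    rw [hv, iterate_succ_apply']
  refine ⟨fun T Bv hT hBv => ⟨lp.compRightCLM _ hg, fun _ _ => rfl,
      (lp.compRightCLM_surjective hg).denseRange, fun x => lp.ext (funext fun k => ?_)⟩,
    fun T Bv hT hBv => ⟨ZeroAtInftyContinuousMap.compCLM (.ofInjective _ hg), fun _ _ => rfl,
      (ZeroAtInftyContinuousMap.compCLM_ofInjective_surjective hg).denseRange,
      fun x => ZeroAtInftyContinuousMap.ext fun k => ?_⟩⟩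
  all_goals simp [hT, hBv, hcoord]

/-- Statement 8 (coordinates indexed by `ℕ` starting at `0`, so the paper's
coordinate `k ≥ 1` is our `k - 1`, the condition `f(1) > 1` becomes `0 < f 0`,
and the weight sequence `v_n = w_{f^{n-1}(j)}` becomes `v n = w (f^[n] j)`).
The pseudo-shift `T` satisfies `(T x) k = w (f k) * x (f k)` and the weighted
backward shift `B_v` satisfies `(B_v x) k = v (k+1) * x (k+1)`.  The claim is
stated both for `ℓ^p(ℕ)` (with `1 ≤ p < ∞`) and for `c₀(ℕ)`. -/
theorem stmt_8 (p : ℝ≥0∞) [Fact (1 ≤ p)] (hp : p ≠ ∞)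
    (f : ℕ → ℕ) (hf : StrictMono f) (hf0 : 0 < f 0)
    (w : ℕ → ℂ) (hw : ∃ C, ∀ n, ‖w n‖ ≤ C) (j : ℕ)
    (v : ℕ → ℂ) (hv : ∀ n, v n = w (f^[n] j)) :
    (∀ T Bv : lp (fun _ : ℕ => ℂ) p →L[ℂ] lp (fun _ : ℕ => ℂ) p,
      (∀ x k, T x k = w (f k) * x (f k)) →
      (∀ x k, Bv x k = v (k + 1) * x (k + 1)) →
      ∃ φ : lp (fun _ : ℕ => ℂ) p →L[ℂ] lp (fun _ : ℕ => ℂ) p,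
        (∀ x k, φ x k = x (f^[k] j)) ∧ DenseRange φ ∧
        ∀ x, φ (T x) = Bv (φ x)) ∧
    (∀ T Bv : ZeroAtInftyContinuousMap ℕ ℂ →L[ℂ] ZeroAtInftyContinuousMap ℕ ℂ,
      (∀ x k, T x k = w (f k) * x (f k)) →
      (∀ x k, Bv x k = v (k + 1) * x (k + 1)) →
      ∃ φ : ZeroAtInftyContinuousMap ℕ ℂ →L[ℂ] ZeroAtInftyContinuousMap ℕ ℂ,
        (∀ x k, φ x k = x (f^[k] j)) ∧ DenseRange φ ∧
        ∀ x, φ (T x) = Bv (φ x)) :=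
  stmt_8_general p f hf hf0 w j v hv
end

section
/- Let X be a separable Banach space, T₁, ..., T_N ∈ L(X), let Y₀ ⊆ X be dense, (y_l)_{l≥1} ⊆ Y₀^N a dense sequence in X^N, maps S_n : Y₀^N → X for n ≥ 0, pairwise disjoint sets A_k ⊆ ℕ each of positive lower density, and a sequence (ε_k) of positive reals tending to 0, such that for each l ≥ 1 and each j ∈ {1,...,N}: (1) Σ_{n ∈ A_l} S_n y_l converges unconditionally in X uniformly in l; (2) for any n ∈ ⋃_k A_k, ‖Σ_{i ∈ A_l \ {n}} T_jⁿ S_i y_l‖ ≤ ε_l; (3) for any n ∈ A_l and any k < l, ‖Σ_{i ∈ A_k} T_jⁿ S_i y_k‖ ≤ ε_l; (4) for any n ∈ A_l, ‖T_jⁿ S_n y_l − y_{l,j}‖ ≤ ε_l. Then T₁, ..., T_N are disjoint frequently hypercyclic, i.e., there exists x ∈ X such that for all nonempty open U₁, ..., U_N ⊆ X, the set {n : T_jⁿ x ∈ U_j for all j} has positive lower density. -/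
/-!
Choose block indices `L 0 < L 1 < ⋯` such that `ε (L m) ≤ 2⁻ᵐ / (m + 2)`, the block `A (L m)`
lies beyond the threshold of (1) for `2⁻ᵐ`, and `y (L m)` is `2¹⁻ᵐ`-close to `y m.unpair.1`.
Then `x = ∑ₘ ∑_{i ∈ A (L m)} S i (y (L m))` converges, and for `n ∈ A (L m)` the vector
`T_jⁿ x` is `2¹⁻ᵐ`-close to `y (L m) j`: (4) and (2) control the `m`-th block, (3) the `m`
earlier ones and (2) the later ones, whose index sets avoid `n`. Since every point of the dense
sequence is targeted at arbitrarily late steps, every product of open sets `U j` contains the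
orbit along some `A (L m)`, which has positive lower density.
-/

open scoped Classical

open Filter Function Topology Metric

lemma lowerDensity_mono {A B : Set ℕ} (h : A ⊆ B) : lowerDensity A ≤ lowerDensity B := by
  have hcard : ∀ N, (((Finset.range (N + 1)).filter (· ∈ B)).card : ℝ) ≤ N + 1 := fun N => by
    exact_mod_cast (Finset.card_filter_le _ _).trans (Finset.card_range _).le
  refine liminf_le_liminf (Eventually.of_forall fun N => ?_) ⟨0, eventually_map.2
    (Eventually.of_forall fun N => by positivity)⟩ (IsBoundedUnder.isCoboundedUnder_ge ⟨2,
    eventually_map.2 ?_⟩)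
  · gcongr
  · filter_upwards [eventually_ge_atTop 1] with N hN
    have hN' : (1 : ℝ) ≤ N := by exact_mod_cast hN
    rw [div_le_iff₀ (by linarith)]
    linarith [hcard N]

lemma eventually_forall_mem_ge_of_pairwise_disjoint {A : ℕ → Set ℕ}
    (hA : Pairwise (Disjoint on A)) (M : ℕ) : ∀ᶠ l in atTop, ∀ n ∈ A l, M ≤ n := by
  have hfin : {l | ∃ n ∈ A l, n < M}.Finite := by
    refine ((Set.finite_Iio M).biUnion fun n _ => ?_).subset fun l ⟨n, hn, hlt⟩ =>
      Set.mem_biUnion hlt hn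
    exact Set.Subsingleton.finite fun l hl l' hl' => by
      by_contra hne
      exact Set.disjoint_left.1 (hA hne) hl hl'
  filter_upwards [Nat.cofinite_eq_atTop ▸ hfin.eventually_cofinite_notMem] with l hl n hn
  by_contra! hlt
  exact hl ⟨n, hn, hlt⟩

lemma DenseRange.frequently_mem_of_isOpen {𝕜 E : Type*} [NontriviallyNormedField 𝕜]
    [NormedAddCommGroup E] [NormedSpace 𝕜 E] {y : ℕ → E} (hy : DenseRange y) {U : Set E}
    (hU : IsOpen U) (hne : U.Nonempty) : ∃ᶠ l in atTop, y l ∈ U := by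
  obtain ⟨u, hu⟩ := hne
  rcases subsingleton_or_nontrivial E with hE | hE
  · exact Frequently.of_forall fun l => Subsingleton.elim u (y l) ▸ hu
  have : ∀ x : E, (𝓝[≠] x).NeBot := fun x => Module.punctured_nhds_neBot 𝕜 E x
  refine Nat.frequently_atTop_iff_infinite.2 fun hfin => ?_
  obtain ⟨_, ⟨⟨l, rfl⟩, hl⟩, hlU⟩ :=
    (hy.sdiff_finite (hfin.image y)).exists_mem_open hU ⟨u, hu⟩
  exact hl ⟨l, hlU, rfl⟩

section Summation

variable {E : Type*} [NormedAddCommGroup E]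

lemma summable_of_forall_norm_sum_le [CompleteSpace E] {g : ℕ → E}
    (h : ∀ δ > 0, ∃ M, ∀ F : Finset ℕ, (∀ n ∈ F, M ≤ n) → ‖∑ n ∈ F, g n‖ ≤ δ) :
    Summable g := by
  refine summable_iff_vanishing_norm.2 fun δ hδ => ?_
  obtain ⟨M, hM⟩ := h (δ / 2) (half_pos hδ)
  refine ⟨Finset.range M, fun F hF => (hM F fun n hn => ?_).trans_lt (half_lt_self hδ)⟩
  by_contra! hlt
  exact Finset.disjoint_left.1 hF hn (Finset.mem_range.2 hlt)

lemma norm_tsum_le_of_forall_norm_sum_le {ι : Type*} {g : ι → E} {δ : ℝ}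
    (h : ∀ F : Finset ι, ‖∑ i ∈ F, g i‖ ≤ δ) : ‖∑' i, g i‖ ≤ δ := by
  by_cases hg : Summable g
  · exact le_of_tendsto' ((continuous_norm.tendsto _).comp hg.hasSum) h
  · simpa [tsum_eq_zero_of_not_summable hg] using h ∅

lemma Summable.tsum_subtype_eq_add_tsum_sdiff_singleton [CompleteSpace E] {ι : Type*}
    {g : ι → E} {s : Set ι} (hg : Summable fun i : s => g i) {b : ι} (hb : b ∈ s) :
    ∑' i : s, g i = g b + ∑' i : ↥(s \ {b}), g i := by
  have hdiff : Summable fun i : ↥(s \ {b}) => g i :=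
    hg.comp_injective (Set.inclusion_injective Set.sdiff_subset)
  calc ∑' i : s, g i = ∑' i : ↥({b} ∪ s \ {b}), g i := by
        rw [Set.union_sdiff_cancel (Set.singleton_subset_iff.2 hb)]
    _ = g b + ∑' i : ↥(s \ {b}), g i := by
        rw [Summable.tsum_union_disjoint Set.disjoint_sdiff_right
          ((Set.finite_singleton b).summable g) hdiff, tsum_singleton]

lemma norm_tsum_sub_le_of_geometric {z : ℕ → E} (hz : Summable z) (m : ℕ) (a : E) {e : ℝ}
    (hlt : ∀ k < m, ‖z k‖ ≤ e) (hgt : ∀ k, m < k → ‖z k‖ ≤ (1 / 2) ^ k) :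
    ‖∑' k, z k - a‖ ≤ m * e + ‖z m - a‖ + (1 / 2) ^ m := by
  have head : ‖∑ k ∈ Finset.range m, z k‖ ≤ m * e := by
    simpa using (norm_sum_le _ _).trans
      (Finset.sum_le_sum fun k hk => hlt k (Finset.mem_range.1 hk))
  have hgeom : HasSum (fun k => ((1 : ℝ) / 2) ^ (k + (m + 1))) ((1 / 2) ^ m) := by
    have h := hasSum_geometric_two.mul_left ((1 / 2 : ℝ) ^ (m + 1))
    rw [show (1 / 2 : ℝ) ^ (m + 1) * 2 = (1 / 2) ^ m by ring] at h
    simpa only [pow_add, mul_comm] using h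
  have tail : ‖∑' k, z (k + (m + 1))‖ ≤ (1 / 2) ^ m :=
    tsum_of_norm_bounded hgeom fun k => hgt _ (by omega)
  rw [← hz.sum_add_tsum_nat_add (m + 1), Finset.sum_range_succ, add_assoc, add_sub_assoc,
    add_sub_right_comm, ← add_assoc]
  exact norm_add₃_le.trans (by gcongr)

lemma summable_subtype_of_forall_norm_sum_filter_le [CompleteSpace E] {A : Set ℕ} {g : ℕ → E}
    (h : ∀ δ > 0, ∃ M, ∀ F : Finset ℕ, (∀ n ∈ F, M ≤ n) → ‖∑ n ∈ F.filter (· ∈ A), g n‖ ≤ δ) :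
    Summable fun i : A => g i := by
  refine summable_subtype_iff_indicator.2 (summable_of_forall_norm_sum_le fun δ hδ => ?_)
  obtain ⟨M, hM⟩ := h δ hδ
  exact ⟨M, fun F hF => by simpa only [Finset.sum_filter, Set.indicator_apply] using hM F hF⟩

lemma norm_tsum_subtype_le {A : Set ℕ} {g : ℕ → E} {M : ℕ} {δ : ℝ} (hA : ∀ n ∈ A, M ≤ n)
    (h : ∀ F : Finset ℕ, (∀ n ∈ F, M ≤ n) → ‖∑ n ∈ F.filter (· ∈ A), g n‖ ≤ δ) :
    ‖∑' i : A, g i‖ ≤ δ := by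
  rw [tsum_subtype]
  refine norm_tsum_le_of_forall_norm_sum_le fun F => ?_
  have hF := h (F.filter (· ∈ A)) fun n hn => hA n (Finset.mem_filter.1 hn).2
  simpa only [Finset.filter_filter, and_self, Finset.sum_filter, Set.indicator_apply] using hF

end Summation

namespace ContinuousLinearMap

variable {R X : Type*} [Semiring R] [NormedAddCommGroup X] [Module R X] {ι : Type*}

lemma summable_iterate (T : X →L[R] X) (n : ℕ) {g : ι → X} (hg : Summable g) :
    Summable fun i => T^[n] (g i) := by
  simpa only [FunLike.coe_pow_eq_iterate] using (T ^ n).summable hg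

lemma iterate_map_tsum (T : X →L[R] X) (n : ℕ) {g : ι → X} (hg : Summable g) :
    T^[n] (∑' i, g i) = ∑' i, T^[n] (g i) := by
  rw [← FunLike.coe_pow_eq_iterate]
  exact (T ^ n).map_tsum hg

lemma norm_iterate_tsum_subtype_sub_le [CompleteSpace X] (T : X →L[R] X) {s : Set ℕ}
    {g : ℕ → X} (hg : Summable fun i : s => g i) {n : ℕ} (hn : n ∈ s) (w : X) :
    ‖T^[n] (∑' i : s, g i) - w‖ ≤ ‖T^[n] (g n) - w‖ + ‖∑' i : ↥(s \ {n}), T^[n] (g i)‖ := by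
  rw [T.iterate_map_tsum n hg,
    Summable.tsum_subtype_eq_add_tsum_sdiff_singleton (g := fun i => T^[n] (g i))
      (T.summable_iterate n hg) hn, add_sub_right_comm]
  exact norm_add_le _ _

end ContinuousLinearMap

section Criterion

variable {R X : Type*} [Semiring R] [NormedAddCommGroup X] [Module R X] [CompleteSpace X]
  {T : X →L[R] X} {A : ℕ → Set ℕ} {f : ℕ → ℕ → X} {w : ℕ → X} {ε : ℕ → ℝ}

theorem norm_iterate_tsum_blocks_sub_le {L : ℕ → ℕ} (hL : StrictMono L)
    (hA : Pairwise (Disjoint on A)) (hs : ∀ l, Summable fun i : A l => f l i)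
    (hz : Summable fun k => ∑' i : A (L k), f (L k) i)
    (h2 : ∀ l, ∀ n ∈ ⋃ k, A k, ‖∑' i : ↥(A l \ {n}), T^[n] (f l i)‖ ≤ ε l)
    (h3 : ∀ l, ∀ n ∈ A l, ∀ k < l, ‖∑' i : A k, T^[n] (f k i)‖ ≤ ε l)
    (h4 : ∀ l, ∀ n ∈ A l, ‖T^[n] (f l n) - w l‖ ≤ ε l)
    (hε : ∀ m, ε (L m) ≤ (1 / 2) ^ m / (m + 2)) {m n : ℕ} (hn : n ∈ A (L m)) :
    ‖T^[n] (∑' k, ∑' i : A (L k), f (L k) i) - w (L m)‖ ≤ 2 * (1 / 2) ^ m := by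
  have hblock (k : ℕ) : T^[n] (∑' i : A (L k), f (L k) i) = ∑' i : A (L k), T^[n] (f (L k) i) :=
    T.iterate_map_tsum n (hs _)
  have hnA : n ∈ ⋃ k, A k := Set.mem_iUnion_of_mem _ hn
  have hcenter : ‖T^[n] (∑' i : A (L m), f (L m) i) - w (L m)‖ ≤ 2 * ε (L m) :=
    (T.norm_iterate_tsum_subtype_sub_le (hs _) hn _).trans
      (by linarith [h4 _ n hn, h2 (L m) n hnA])
  have hbefore (k : ℕ) (hk : k < m) : ‖T^[n] (∑' i : A (L k), f (L k) i)‖ ≤ ε (L m) := by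
    rw [hblock]
    exact h3 _ n hn _ (hL hk)
  have hafter (k : ℕ) (hk : m < k) : ‖T^[n] (∑' i : A (L k), f (L k) i)‖ ≤ (1 / 2) ^ k := by
    have hnk : n ∉ A (L k) := Set.disjoint_left.1 (hA (hL.injective.ne hk.ne)) hn
    rw [hblock, ← Set.sdiff_singleton_eq_self hnk]
    exact (h2 _ n hnA).trans ((hε k).trans (div_le_self (by positivity) (by linarith)))
  have hεm : (m + 2) * ε (L m) ≤ (1 / 2) ^ m := by
    rw [← le_div_iff₀' (by positivity)]
    exact hε m
  rw [T.iterate_map_tsum n hz]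
  refine (norm_tsum_sub_le_of_geometric (T.summable_iterate n hz) m _ hbefore hafter).trans ?_
  linarith

end Criterion

lemma pos_lowerDensity_of_forall_dist_le {E : Type*} [PseudoMetricSpace E] {v y : ℕ → E}
    (hy : DenseRange y) {A : ℕ → Set ℕ} (hA : ∀ k, 0 < lowerDensity (A k)) {L : ℕ → ℕ}
    {δ : ℕ → ℝ} (hδ : Tendsto δ atTop (𝓝 0))
    (hv : ∀ m, ∀ n ∈ A (L m), dist (v n) (y (L m)) ≤ δ m)
    (hyL : ∀ m, dist (y (L m)) (y m.unpair.1) ≤ δ m) {U : Set E} (hU : IsOpen U)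
    (hne : U.Nonempty) : 0 < lowerDensity {n | v n ∈ U} := by
  obtain ⟨u, hu⟩ := hne
  obtain ⟨r, hr, hball⟩ := Metric.isOpen_iff.1 hU u hu
  obtain ⟨p, hp⟩ := Metric.denseRange_iff.1 hy u (r / 3) (by positivity)
  obtain ⟨K, hK⟩ := eventually_atTop.1 (hδ.eventually (gt_mem_nhds (by positivity : 0 < r / 3)))
  -- `Nat.pair p K` is a step aiming at `y p` that comes late enough for `δ` to be small
  have hyL' := hyL (Nat.pair p K)
  rw [Nat.unpair_pair] at hyL'
  have hδK := hK _ (Nat.right_le_pair p K)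
  refine (hA (L (Nat.pair p K))).trans_le (lowerDensity_mono fun n hn => hball ?_)
  calc dist (v n) u
      ≤ dist (v n) (y (L (Nat.pair p K))) + dist (y (L (Nat.pair p K))) (y p) + dist (y p) u :=
        dist_triangle4 _ _ _ _
    _ < r := by linarith [hv _ n hn, dist_comm u (y p)]

theorem stmt_13_general {X : Type*} [NormedAddCommGroup X] [NormedSpace ℂ X] [CompleteSpace X]
    (N : ℕ) (T : Fin N → X →L[ℂ] X)
    (y : ℕ → Fin N → X) (hyDense : DenseRange y)
    (S : ℕ → (Fin N → X) → X)
    (A : ℕ → Set ℕ) (hAdisj : ∀ k k', k ≠ k' → Disjoint (A k) (A k'))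
    (hAdens : ∀ k, 0 < lowerDensity (A k))
    (ε : ℕ → ℝ)
    (hεlim : Filter.Tendsto ε Filter.atTop (nhds 0))
    -- (1) `∑_{n ∈ A_l} S_n y_l` converges unconditionally, uniformly in `l`:
    (h1 : ∀ δ : ℝ, 0 < δ → ∃ M : ℕ, ∀ l : ℕ, ∀ F : Finset ℕ, (∀ n ∈ F, M ≤ n) →
      ‖∑ n ∈ F.filter (· ∈ A l), S n (y l)‖ ≤ δ)
    -- (2)
    (h2 : ∀ l : ℕ, ∀ j : Fin N, ∀ n ∈ ⋃ k, A k,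
      ‖∑' i : ↥(A l \ {n}), (⇑(T j))^[n] (S (↑i) (y l))‖ ≤ ε l)
    -- (3)
    (h3 : ∀ l : ℕ, ∀ j : Fin N, ∀ n ∈ A l, ∀ k < l,
      ‖∑' i : ↥(A k), (⇑(T j))^[n] (S (↑i) (y k))‖ ≤ ε l)
    -- (4)
    (h4 : ∀ l : ℕ, ∀ j : Fin N, ∀ n ∈ A l,
      ‖(⇑(T j))^[n] (S n (y l)) - y l j‖ ≤ ε l) :
    ∃ x : X, ∀ U : Fin N → Set X, (∀ j, IsOpen (U j)) → (∀ j, (U j).Nonempty) →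
      0 < lowerDensity {n : ℕ | ∀ j, (⇑(T j))^[n] x ∈ U j} := by
  choose M hM using fun m : ℕ => h1 ((1 / 2) ^ m) (by positivity)
  have hs (l : ℕ) : Summable fun i : A l => S i (y l) :=
    summable_subtype_of_forall_norm_sum_filter_le fun δ hδ => (h1 δ hδ).imp fun _ hM => hM l
  obtain ⟨L, hL, hLspec⟩ := extraction_forall_of_frequently fun m =>
    (hyDense.frequently_mem_of_isOpen (𝕜 := ℂ) isOpen_ball
      (nonempty_ball.2 (by positivity : (0 : ℝ) < 2 * (1 / 2) ^ m))).and_eventually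
      ((hεlim.eventually (gt_mem_nhds (by positivity : (0 : ℝ) < (1 / 2) ^ m / (m + 2)))).and
        (eventually_forall_mem_ge_of_pairwise_disjoint hAdisj (M m)))
  have hz : Summable fun k => ∑' i : A (L k), S i (y (L k)) :=
    summable_geometric_two.of_norm_bounded fun k =>
      norm_tsum_subtype_le (hLspec k).2.2 (hM k (L k))
  refine ⟨∑' k, ∑' i : A (L k), S i (y (L k)), fun U hU hne => ?_⟩
  have happrox (m : ℕ) (n : ℕ) (hn : n ∈ A (L m)) :
      dist (fun j => (T j)^[n] (∑' k, ∑' i : A (L k), S i (y (L k)))) (y (L m)) ≤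
        2 * (1 / 2) ^ m :=
    (dist_pi_le_iff (by positivity)).2 fun j => by
      rw [dist_eq_norm]
      exact norm_iterate_tsum_blocks_sub_le (f := fun l i => S i (y l)) (w := fun l => y l j)
        hL hAdisj hs hz (fun l => h2 l j) (fun l => h3 l j) (fun l => h4 l j)
        (fun m => (hLspec m).2.1.le) hn
  have hδ : Tendsto (fun m : ℕ => 2 * (1 / 2 : ℝ) ^ m) atTop (𝓝 0) := by
    simpa using (tendsto_pow_atTop_nhds_zero_of_lt_one (by norm_num : (0 : ℝ) ≤ 1 / 2)
      (by norm_num)).const_mul 2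
  simpa only [Set.mem_univ_pi] using pos_lowerDensity_of_forall_dist_le hyDense hAdens hδ
    happrox (fun m => (mem_ball.1 (hLspec m).1).le)
    (isOpen_set_pi Set.finite_univ fun j _ => hU j) (Set.univ_pi_nonempty_iff.2 hne)

/-- the Disjoint Frequent Hypercyclicity Criterion. -/
theorem stmt_13 {X : Type*} [NormedAddCommGroup X] [NormedSpace ℂ X] [CompleteSpace X]
    [TopologicalSpace.SeparableSpace X]
    (N : ℕ) (T : Fin N → X →L[ℂ] X)
    (Y₀ : Set X) (hY₀ : Dense Y₀)
    (y : ℕ → Fin N → X) (hyY₀ : ∀ l j, y l j ∈ Y₀) (hyDense : DenseRange y)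
    (S : ℕ → (Fin N → X) → X)
    (A : ℕ → Set ℕ) (hAdisj : ∀ k k', k ≠ k' → Disjoint (A k) (A k'))
    (hAdens : ∀ k, 0 < lowerDensity (A k))
    (ε : ℕ → ℝ) (hεpos : ∀ k, 0 < ε k)
    (hεlim : Filter.Tendsto ε Filter.atTop (nhds 0))
    -- (1) `∑_{n ∈ A_l} S_n y_l` converges unconditionally, uniformly in `l`:
    (h1 : ∀ δ : ℝ, 0 < δ → ∃ M : ℕ, ∀ l : ℕ, ∀ F : Finset ℕ, (∀ n ∈ F, M ≤ n) →
      ‖∑ n ∈ F.filter (· ∈ A l), S n (y l)‖ ≤ δ)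
    -- (2)
    (h2 : ∀ l : ℕ, ∀ j : Fin N, ∀ n ∈ ⋃ k, A k,
      ‖∑' i : ↥(A l \ {n}), (⇑(T j))^[n] (S (↑i) (y l))‖ ≤ ε l)
    -- (3)
    (h3 : ∀ l : ℕ, ∀ j : Fin N, ∀ n ∈ A l, ∀ k < l,
      ‖∑' i : ↥(A k), (⇑(T j))^[n] (S (↑i) (y k))‖ ≤ ε l)
    -- (4)
    (h4 : ∀ l : ℕ, ∀ j : Fin N, ∀ n ∈ A l,
      ‖(⇑(T j))^[n] (S n (y l)) - y l j‖ ≤ ε l) :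
    ∃ x : X, ∀ U : Fin N → Set X, (∀ j, IsOpen (U j)) → (∀ j, (U j).Nonempty) →
      0 < lowerDensity {n : ℕ | ∀ j, (⇑(T j))^[n] x ∈ U j} :=
  stmt_13_general N T y hyDense S A hAdisj hAdens ε hεlim h1 h2 h3 h4
end

section
/- Let v and w be bounded weight sequences on ℕ with |v_n| ≤ 2 and |w_n| ≤ C for all n, and suppose there is a sequence n_1 < n_2 < ⋯ with n_l/n_{l+1} → 0 such that for every n ∉ ⋃_{l≥1} [n_l, 2n_l + l] one has |W²_{1,n}/W¹_{1,n}| ≥ 3/2, where W¹_{1,n} = Π_{ν=1}^n v_{1+ν} and W²_{1,n} = Π_{ν=1}^n w_{1+ν}. Then the set {n ≥ 1 : | W²_{1,n}/W¹_{1,n} − 1 | < 1/2} has lower density zero. -/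
open scoped Classical
open Filter

lemma aux_density (n : ℕ → ℕ) (hn : StrictMono n)
    (hratio : Filter.Tendsto (fun l : ℕ => (n l : ℝ) / (n (l + 1) : ℝ))
      Filter.atTop (nhds 0))
    (A : Set ℕ)
    (hA : ∀ m ∈ A, ∃ l, 1 ≤ l ∧ n l ≤ m ∧ m ≤ 2 * n l + l) :
    lowerDensity A = 0 := by
  set u : ℕ → ℝ := fun N => (((Finset.range (N + 1)).filter (· ∈ A)).card : ℝ) / (N : ℝ) with hu
  have hu0 : ∀ N, 0 ≤ u N := fun N => div_nonneg (Nat.cast_nonneg _) (Nat.cast_nonneg _)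
  have hle : ∀ l, l ≤ n l := fun l => hn.le_apply
  -- choose L0
  have h12 : ∀ᶠ l in atTop, (n l : ℝ) / (n (l+1) : ℝ) < 1/2 :=
    hratio.eventually (gt_mem_nhds (by norm_num : (0:ℝ) < 1/2))
  obtain ⟨L0', hL0'⟩ := eventually_atTop.1 h12
  set L0 := max L0' 1 with hL0def
  have hL0 : ∀ l, L0 ≤ l → 2 * n l ≤ n (l + 1) := by
    intro l hl
    have h := hL0' l (le_trans (le_max_left _ _) hl)
    have hp : (0:ℝ) < (n (l+1) : ℝ) := by
      have := hle (l+1); exact_mod_cast Nat.lt_of_lt_of_le (Nat.succ_pos l) this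
    have hlt : ((2 * n l : ℕ) : ℝ) < ((n (l+1) : ℕ) : ℝ) := by
      have := (div_lt_iff₀ hp).1 h; push_cast; linarith
    have := Nat.cast_lt.1 hlt
    omega
  set C0 : ℕ := ∑ l ∈ Finset.Icc 1 L0, n l with hC0
  -- sum bound
  have hsum : ∀ L, L0 ≤ L → ∑ l ∈ Finset.Icc 1 L, n l ≤ C0 + 2 * n L := by
    intro L hL
    induction L, hL using Nat.le_induction with
    | base => omega
    | succ L hL ih =>
      rw [Finset.sum_Icc_succ_top (by omega : 1 ≤ L + 1)]
      have := hL0 L hL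
      omega
  -- card bound
  have hcard : ∀ L, L0 ≤ L →
      (((Finset.range (n (L+1) - 1 + 1)).filter (· ∈ A)).card) ≤ 3 * (C0 + 2 * n L) := by
    intro L hL
    have hsub : ((Finset.range (n (L+1) - 1 + 1)).filter (· ∈ A)) ⊆
        (Finset.Icc 1 L).biUnion (fun l => Finset.Icc (n l) (2 * n l + l)) := by
      intro m hm
      rw [Finset.mem_filter, Finset.mem_range] at hm
      obtain ⟨hm1, hm2⟩ := hm
      obtain ⟨l, hl1, hl2, hl3⟩ := hA m hm2
      have hmlt : m < n (L+1) := by have := hle (L+1); omega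
      have hlL : l ≤ L := by
        by_contra hc
        have : n (L+1) ≤ n l := hn.monotone (by omega)
        omega
      rw [Finset.mem_biUnion]
      exact ⟨l, Finset.mem_Icc.2 ⟨hl1, hlL⟩, Finset.mem_Icc.2 ⟨hl2, hl3⟩⟩
    calc (((Finset.range (n (L+1) - 1 + 1)).filter (· ∈ A)).card)
        ≤ ((Finset.Icc 1 L).biUnion (fun l => Finset.Icc (n l) (2 * n l + l))).card :=
          Finset.card_le_card hsub
      _ ≤ ∑ l ∈ Finset.Icc 1 L, (Finset.Icc (n l) (2 * n l + l)).card :=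
          Finset.card_biUnion_le
      _ ≤ ∑ l ∈ Finset.Icc 1 L, 3 * n l := by
          apply Finset.sum_le_sum
          intro l hl
          rw [Finset.mem_Icc] at hl
          rw [Nat.card_Icc]
          have := hle l
          omega
      _ = 3 * ∑ l ∈ Finset.Icc 1 L, n l := by rw [Finset.mul_sum]
      _ ≤ 3 * (C0 + 2 * n L) := by
          have := hsum L hL; omega
  -- u bound along subsequence
  have key : ∀ L, L0 ≤ L → u (n (L+1) - 1) ≤ (6*(C0:ℝ) + 12*(n L:ℝ)) / (n (L+1) : ℝ) := by
    intro L hL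
    have h2 : 2 ≤ n (L+1) := by
      have h1 := hle (L + 1)
      have : 1 ≤ L := le_trans (le_max_right _ _) hL
      omega
    have hNpos : (0:ℝ) < ((n (L+1) - 1 : ℕ) : ℝ) := by
      have : 1 ≤ n (L+1) - 1 := by omega
      exact_mod_cast Nat.lt_of_lt_of_le Nat.zero_lt_one this
    have hp : (0:ℝ) < (n (L+1) : ℝ) := by positivity
    rw [hu]
    simp only []
    rw [div_le_div_iff₀ hNpos hp]
    have hnat : (((Finset.range (n (L+1) - 1 + 1)).filter (· ∈ A)).card) * n (L+1)
        ≤ (6*C0 + 12*n L) * (n (L+1) - 1) := by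
      have hc := hcard L hL
      calc (((Finset.range (n (L+1) - 1 + 1)).filter (· ∈ A)).card) * n (L+1)
          ≤ (3 * (C0 + 2 * n L)) * n (L+1) := Nat.mul_le_mul_right _ hc
        _ ≤ (3 * (C0 + 2 * n L)) * (2 * (n (L+1) - 1)) := by
            apply Nat.mul_le_mul_left; omega
        _ = (6*C0 + 12*n L) * (n (L+1) - 1) := by ring_nf
    calc (((Finset.range (n (L+1) - 1 + 1)).filter (· ∈ A)).card : ℝ) * (n (L+1) : ℝ)
        = (((((Finset.range (n (L+1) - 1 + 1)).filter (· ∈ A)).card) * n (L+1) : ℕ) : ℝ) := by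
          push_cast; ring
      _ ≤ (((6*C0 + 12*n L) * (n (L+1) - 1) : ℕ) : ℝ) := by exact_mod_cast hnat
      _ = (6*(C0:ℝ) + 12*(n L:ℝ)) * ((n (L+1) - 1 : ℕ) : ℝ) := by push_cast; ring
  -- tendsto of the bound
  have hnL : Tendsto (fun L => ((n (L+1) : ℕ) : ℝ)) atTop atTop := by
    have h1 : Tendsto (fun L => n (L+1)) atTop atTop :=
      hn.tendsto_atTop.comp (tendsto_add_atTop_nat 1)
    exact tendsto_natCast_atTop_atTop.comp h1
  have hg : Tendsto (fun L => (6*(C0:ℝ) + 12*(n L:ℝ)) / (n (L+1) : ℝ)) atTop (nhds 0) := by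
    have heq : (fun L => (6*(C0:ℝ) + 12*(n L:ℝ)) / (n (L+1) : ℝ))
        = fun L => (6*(C0:ℝ)) / (n (L+1) : ℝ) + 12 * ((n L : ℝ) / (n (L+1) : ℝ)) := by
      funext L; field_simp
    rw [heq]
    have h1 : Tendsto (fun L => (6*(C0:ℝ)) / (n (L+1) : ℝ)) atTop (nhds 0) :=
      tendsto_const_nhds.div_atTop hnL
    have h2 : Tendsto (fun L => 12 * ((n L : ℝ) / (n (L+1) : ℝ))) atTop (nhds 0) := by
      simpa using hratio.const_mul (12:ℝ)
    simpa using h1.add h2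
  -- liminf machinery
  have hb : IsBoundedUnder (· ≥ ·) atTop u := Filter.isBoundedUnder_of ⟨0, fun N => hu0 N⟩
  have hcb : IsCoboundedUnder (· ≥ ·) atTop u := by
    apply Filter.isCoboundedUnder_ge_of_eventually_le atTop (x := 2)
    filter_upwards [eventually_ge_atTop 1] with N hN
    have hNpos : (0:ℝ) < (N:ℝ) := by exact_mod_cast hN
    rw [hu]
    simp only []
    rw [div_le_iff₀ hNpos]
    have hcle : ((Finset.range (N + 1)).filter (· ∈ A)).card ≤ N + 1 :=
      le_trans (Finset.card_filter_le _ _) (by simp)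
    have : (((Finset.range (N + 1)).filter (· ∈ A)).card : ℝ) ≤ (N:ℝ) + 1 := by
      exact_mod_cast hcle
    have h1 : (1:ℝ) ≤ (N:ℝ) := by exact_mod_cast hN
    linarith
  rw [lowerDensity]
  refine le_antisymm ?_ (Filter.le_liminf_of_le hcb (Filter.Eventually.of_forall hu0))
  refine le_of_forall_pos_le_add ?_
  intro ε hε
  rw [zero_add]
  apply Filter.liminf_le_of_frequently_le _ hb
  have hev : ∀ᶠ L in atTop, u (n (L+1) - 1) ≤ ε := by
    filter_upwards [hg.eventually (gt_mem_nhds hε), eventually_ge_atTop L0] with L h1 h2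
    exact le_of_lt (lt_of_le_of_lt (key L h2) h1)
  have htend : Tendsto (fun L : ℕ => n (L+1) - 1) atTop atTop := by
    apply tendsto_atTop_atTop.2
    intro b
    exact ⟨b, fun a ha => by have := hle (a+1); omega⟩
  exact htend.frequently hev.frequently

/-- weights indexed so that the paper's product
`W^1_{1,m} = ∏_{ν=1}^m v_{1+ν}` becomes `∏ ν ∈ Finset.Icc 1 m, v ν`, matching
the `0`-based coordinate convention for weighted shifts. -/
theorem stmt_19 (v w : ℕ → ℂ) (hv : ∀ n, ‖v n‖ ≤ 2)
    (C : ℝ) (hw : ∀ n, ‖w n‖ ≤ C)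
    (n : ℕ → ℕ) (hn : StrictMono n)
    (hratio : Filter.Tendsto (fun l : ℕ => (n l : ℝ) / (n (l + 1) : ℝ))
      Filter.atTop (nhds 0))
    (hbig : ∀ m : ℕ, 1 ≤ m → (∀ l, 1 ≤ l → m ∉ Set.Icc (n l) (2 * n l + l)) →
      (3 / 2 : ℝ) ≤
        ‖(∏ ν ∈ Finset.Icc 1 m, w ν) / (∏ ν ∈ Finset.Icc 1 m, v ν)‖) :
    lowerDensity
      {m : ℕ | 1 ≤ m ∧
        ‖(∏ ν ∈ Finset.Icc 1 m, w ν) / (∏ ν ∈ Finset.Icc 1 m, v ν) - 1‖ <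
          1 / 2} = 0 := by
  apply aux_density n hn hratio
  rintro m ⟨hm1, hm2⟩
  by_contra hc
  push_neg at hc
  have hnot : ∀ l, 1 ≤ l → m ∉ Set.Icc (n l) (2 * n l + l) := by
    intro l hl hmem
    rw [Set.mem_Icc] at hmem
    have := hc l hl
    omega
  have h32 := hbig m hm1 hnot
  set P := (∏ ν ∈ Finset.Icc 1 m, w ν) / (∏ ν ∈ Finset.Icc 1 m, v ν)
  have : ‖P‖ ≤ ‖P - 1‖ + ‖(1:ℂ)‖ := by
    calc ‖P‖ = ‖(P - 1) + 1‖ := by ring_nf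
      _ ≤ ‖P - 1‖ + ‖(1:ℂ)‖ := norm_add_le _ _
  simp only [norm_one] at this
  linarith
end
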